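/- arXiv:2001.08689 — 6 statements merged into one kernel-verified Lean document; each statement's English description precedes it below -/
import Mathlib

section
/- Let A ≨ B be finite groups such that every non-trivial element of B has a non-trivial power lying in A, and let X be a set. Then every discrete subgroup of the topological group B^{X,A} is finite, where B^{X,A} carries the group topology for which the compact subgroup A^X (with the product topology) is open. -/
/-!
A discrete subgroup `Γ` meets some neighbourhood of `1` only in `1`. Since `A` is discrete, the
preimage of that neighbourhood in `A^X` contains every function that is trivial on some finite
set `I`. If `δ ∈ Γ` is trivial on `I` but `δ ≠ 1`, some power `ε` of `δ` has prime order `p`;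
each coordinate of `ε` then has order `1` or `p`, so a power of it generating the same cyclic
group lies in `A`. Thus `ε ∈ A^X` is trivial on `I`, forcing `ε = 1`, a contradiction. Hence
restriction to `I` is injective on `Γ`, which embeds `Γ` into the finite group `B^I`.
-/

open Filter Topology

theorem mem_of_pow_prime_eq_one_of_pow_mem {G : Type*} [Group G] {H : Subgroup G} {g : G}
    {p n : ℕ} (hp : p.Prime) (hgp : g ^ p = 1) (hgn : g ^ n ≠ 1) (hH : g ^ n ∈ H) : g ∈ H := by
  have : Fact p.Prime := ⟨hp⟩
  have hg : orderOf g = p := orderOf_eq_prime hgp fun h => hgn (by rw [h, one_pow])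
  have hcop : n.gcd (orderOf g) = 1 := by
    rw [hg, ← Nat.Coprime, Nat.coprime_comm, hp.coprime_iff_not_dvd]
    rintro ⟨k, rfl⟩
    exact hgn (by rw [pow_mul, hgp, one_pow])
  exact Subgroup.zpowers_le.mpr hH (mem_zpowers_pow_iff.mpr hcop)

theorem mem_of_pow_prime_eq_one {G : Type*} [Group G] {H : Subgroup G}
    (hpow : ∀ g : G, g ≠ 1 → ∃ n : ℕ, g ^ n ≠ 1 ∧ g ^ n ∈ H) {g : G} {p : ℕ} (hp : p.Prime)
    (hgp : g ^ p = 1) : g ∈ H := by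
  rcases eq_or_ne g 1 with rfl | hg
  · exact H.one_mem
  · obtain ⟨n, hgn, hH⟩ := hpow g hg
    exact mem_of_pow_prime_eq_one_of_pow_mem hp hgp hgn hH

theorem IsOfFinOrder.exists_orderOf_pow_prime {G : Type*} [Monoid G] {g : G}
    (hg : IsOfFinOrder g) (hg1 : g ≠ 1) : ∃ k, (orderOf (g ^ k)).Prime := by
  refine ⟨orderOf g / (orderOf g).minFac, ?_⟩
  rw [orderOf_pow_orderOf_div hg.orderOf_pos.ne' (Nat.minFac_dvd _)]
  exact Nat.minFac_prime fun h => hg1 (orderOf_eq_one_iff.mp h)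

theorem exists_finset_forall_eq_imp_mem_of_mem_nhds {X A : Type*} [TopologicalSpace A]
    [DiscreteTopology A] {f : X → A} {U : Set (X → A)} (hU : U ∈ 𝓝 f) :
    ∃ I : Finset X, ∀ g : X → A, (∀ x ∈ I, g x = f x) → g ∈ U := by
  rw [nhds_pi, Filter.mem_pi'] at hU
  obtain ⟨I, t, ht, hIt⟩ := hU
  refine ⟨I, fun g hg => hIt fun x hx => ?_⟩
  rw [hg x hx]
  exact mem_of_mem_nhds (ht x)

theorem Subgroup.exists_nhds_one_forall_mem_eq_one {G : Type*} [Group G] [TopologicalSpace G]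
    (Γ : Subgroup G) [DiscreteTopology Γ] : ∃ U ∈ 𝓝 (1 : G), ∀ γ ∈ Γ, γ ∈ U → γ = 1 := by
  obtain ⟨U, hU, hUΓ⟩ := (mem_nhds_subtype (Γ : Set G) 1 {1}).mp ((isOpen_discrete _).mem_nhds rfl)
  exact ⟨U, hU, fun γ hγ hγU => congrArg Subtype.val (hUΓ (a := ⟨γ, hγ⟩) hγU)⟩

section

variable {X B : Type*} [Group B] {S : Subgroup (X → B)}

theorem Subgroup.isOfFinOrder_of_pi_finite [Finite B] (f : S) : IsOfFinOrder f :=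
  isOfFinOrder_iff_pow_eq_one.mpr
    ⟨Nat.card B, Nat.card_pos, Subtype.ext (funext fun _ => pow_card_eq_one')⟩

theorem Subgroup.eq_one_of_forall_eq_one_on [Finite B] {A : Subgroup B}
    (hpow : ∀ b : B, b ≠ 1 → ∃ n : ℕ, b ^ n ≠ 1 ∧ b ^ n ∈ A) {Γ : Subgroup S} {I : Set X}
    (hΓ : ∀ γ ∈ Γ, (∀ x, (γ : X → B) x ∈ A) → (∀ x ∈ I, (γ : X → B) x = 1) → γ = 1)
    {δ : S} (hδ : δ ∈ Γ) (hδI : ∀ x ∈ I, (δ : X → B) x = 1) : δ = 1 := by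
  by_contra hδ1
  obtain ⟨k, hk⟩ := (Subgroup.isOfFinOrder_of_pi_finite δ).exists_orderOf_pow_prime hδ1
  have hA : ∀ x, ((δ ^ k : S) : X → B) x ∈ A := fun x =>
    mem_of_pow_prime_eq_one hpow hk (congrFun (congrArg Subtype.val (pow_orderOf_eq_one (δ ^ k))) x)
  have hI : ∀ x ∈ I, ((δ ^ k : S) : X → B) x = 1 := fun x hx => by simp [hδI x hx]
  exact hk.ne_one (orderOf_eq_one_iff.mpr (hΓ _ (pow_mem hδ k) hA hI))

theorem Subgroup.finite_of_forall_eq_one_on [Finite B] {Γ : Subgroup S} (I : Finset X)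
    (hΓ : ∀ δ ∈ Γ, (∀ x ∈ I, (δ : X → B) x = 1) → δ = 1) : (Γ : Set S).Finite := by
  refine Set.Finite.of_finite_image (f := fun (s : S) (x : I) => (s : X → B) x)
    (Set.toFinite _) fun γ₁ h₁ γ₂ h₂ h => ?_
  refine inv_mul_eq_one.mp (hΓ _ (mul_mem (inv_mem h₁) h₂) fun x hx => ?_)
  simpa [inv_mul_eq_one] using congrFun h ⟨x, hx⟩

end

theorem discrete_subgroups_finite_general {B : Type*} [Group B] [Finite B]
    (A : Subgroup B)
    (hpow : ∀ b : B, b ≠ 1 → ∃ n : ℕ, 1 ≤ n ∧ b ^ n ≠ 1 ∧ b ^ n ∈ A)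
    (X : Type*)
    (S : Subgroup (X → B))
    [TopologicalSpace S]
    [TopologicalSpace A] [DiscreteTopology A]
    (j : (X → A) → S) (hj : ∀ (f : X → A) (x : X), ((j f : X → B)) x = f x)
    (hopen : Topology.IsOpenEmbedding j) :
    ∀ Γ : Subgroup S, DiscreteTopology Γ → (Γ : Set S).Finite := by
  intro Γ _
  obtain ⟨U, hU, hUΓ⟩ := Γ.exists_nhds_one_forall_mem_eq_one
  have hj1 : j 1 = 1 := Subtype.ext (funext fun x => hj 1 x)
  obtain ⟨I, hI⟩ := exists_finset_forall_eq_imp_mem_of_mem_nhds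
    (hopen.continuous.continuousAt.preimage_mem_nhds (hj1 ▸ hU))
  refine Subgroup.finite_of_forall_eq_one_on I fun δ hδ hδI =>
    Subgroup.eq_one_of_forall_eq_one_on (fun b hb => (hpow b hb).imp fun _ => And.right)
      (fun γ hγ hγA hγI => hUΓ γ hγ ?_) hδ hδI
  have hjγ : j (fun x => ⟨_, hγA x⟩) = γ := Subtype.ext (funext fun x => hj _ x)
  exact hjγ ▸ hI _ fun x hx => Subtype.ext (hγI x hx)

/-- Let `A ≨ B` be finite groups such that every non-trivial element of
`B` has a non-trivial power lying in `A`, and let `X` be an infinite set. Equip the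
group `S = B^{X,A}` (functions `X → B` lying in `A` almost everywhere) with the group
topology for which the compact subgroup `A^X` (product topology on `X → A`, `A`
discrete) is open, i.e. such that the natural inclusion `j : (X → A) → S` is an open
embedding. Then every discrete subgroup of `S` is finite. -/
theorem discrete_subgroups_finite {B : Type*} [Group B] [Finite B]
    (A : Subgroup B) (hA : A ≠ ⊤)
    (hpow : ∀ b : B, b ≠ 1 → ∃ n : ℕ, 1 ≤ n ∧ b ^ n ≠ 1 ∧ b ^ n ∈ A)
    (X : Type*) [Infinite X]
    (S : Subgroup (X → B)) (hS : ∀ f : X → B, f ∈ S ↔ {x : X | f x ∉ A}.Finite)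
    [TopologicalSpace S] [IsTopologicalGroup S]
    [TopologicalSpace A] [DiscreteTopology A]
    (j : (X → A) → S) (hj : ∀ (f : X → A) (x : X), ((j f : X → B)) x = f x)
    (hopen : Topology.IsOpenEmbedding j) :
    ∀ Γ : Subgroup S, DiscreteTopology Γ → (Γ : Set S).Finite :=
  discrete_subgroups_finite_general A hpow X S j hj hopen
end

section
/- Let A ≨ B be finite groups such that every non-trivial element of B has a non-trivial power in A, and X an infinite set. For every finite subset Σ ⊆ X, if O_Σ denotes the subgroup of B^{X,A} of functions vanishing on Σ and U_Σ = O_Σ ∩ A^X, then every non-trivial subgroup of O_Σ intersects U_Σ non-trivially. -/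
/-- Let `A ≨ B` be finite groups such that every non-trivial element
of `B` has a non-trivial power lying in `A`, and let `X` be an infinite set. For
every finite subset `Σ ⊆ X`, every non-trivial subgroup of
`O_Σ = {f ∈ B^{X,A} | f ≡ 1 on Σ}` intersects `U_Σ = O_Σ ∩ A^X` non-trivially.
Here a subgroup `H` of the product group `X → B` contained in `O_Σ` is described
by the hypotheses that its elements lie in `A` almost everywhere and vanish on `Σ`. -/
theorem nontrivial_subgroup_meets_USigma {B : Type*} [Group B] [Finite B]
    (A : Subgroup B) (hA : A ≠ ⊤)
    (hpow : ∀ b : B, b ≠ 1 → ∃ n : ℕ, 1 ≤ n ∧ b ^ n ≠ 1 ∧ b ^ n ∈ A)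
    (X : Type*) [Infinite X] (sig : Set X) (hsig : sig.Finite)
    (H : Subgroup (X → B))
    (hHA : ∀ f ∈ H, {x : X | f x ∉ A}.Finite)
    (hHsig : ∀ f ∈ H, ∀ x ∈ sig, f x = 1)
    (hH : H ≠ ⊥) :
    ∃ f ∈ H, f ≠ 1 ∧ ∀ x : X, f x ∈ A := by
  classical
  have key : ∀ (n : ℕ) (f : X → B) (hf : f ∈ H), f ≠ 1 →
      ((hHA f hf).toFinset.card ≤ n) →
      ∃ g ∈ H, g ≠ 1 ∧ ∀ x : X, g x ∈ A := by
    intro n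
    induction n with
    | zero =>
      intro f hf hf1 hcard
      refine ⟨f, hf, hf1, ?_⟩
      intro x
      by_contra hx
      have : x ∈ (hHA f hf).toFinset := by simpa using hx
      have := Finset.card_pos.mpr ⟨x, this⟩
      omega
    | succ n ih =>
      intro f hf hf1 hcard
      by_cases hempty : (hHA f hf).toFinset = ∅
      · refine ⟨f, hf, hf1, ?_⟩
        intro x
        by_contra hx
        have : x ∈ (hHA f hf).toFinset := by simpa using hx
        simp [hempty] at this
      · obtain ⟨x₀, hx₀⟩ := Finset.nonempty_of_ne_empty hempty
        have hx₀A : f x₀ ∉ A := by simpa using hx₀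
        have hb1 : f x₀ ≠ 1 := fun h => hx₀A (h ▸ A.one_mem)
        obtain ⟨m, hm1, hmne, hmA⟩ := hpow (f x₀) hb1
        have hg : f ^ m ∈ H := pow_mem hf m
        have hg1 : f ^ m ≠ 1 := by
          intro h
          apply hmne
          have := congrFun h x₀
          simpa using this
        have hsub : (hHA (f ^ m) hg).toFinset ⊆ (hHA f hf).toFinset.erase x₀ := by
          intro x hx
          have hxA : (f x) ^ m ∉ A := by simpa using hx
          rw [Finset.mem_erase]
          constructor
          · rintro rfl; exact hxA hmA
          · simp only [Set.Finite.mem_toFinset, Set.mem_setOf_eq]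
            intro hfx
            exact hxA (A.pow_mem hfx m)
        have hcard' : (hHA (f ^ m) hg).toFinset.card ≤ n := by
          have h1 := Finset.card_le_card hsub
          have h2 := Finset.card_erase_of_mem hx₀
          omega
        exact ih (f ^ m) hg hg1 hcard'
  rw [Subgroup.ne_bot_iff_exists_ne_one] at hH
  obtain ⟨⟨f, hf⟩, hfne⟩ := hH
  have hf1 : f ≠ 1 := fun h => hfne (Subtype.ext h)
  exact key (hHA f hf).toFinset.card f hf hf1 le_rfl
end

section
/- The subgroup Γ_{n,d} = C_n ≀_{V_d} (C_d ∗ C_d) of G_{n,d} acts freely and transitively on the vertices of the graph X_{n,d}, where C_d ∗ C_d acts on T_d as its Bass–Serre tree with one orbit of edges and C_n ≤ 𝔖_n is the cyclic group generated by the n-cycle (0,1,…,n−1). -/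
/-!
Both factors act simply transitively: `Q` on the edges of the tree, and `C_n` on `Fin n`, being
the group of translations of `ℤ/n`. So the edge component of the target determines `g`, and then
each `σ_v` must be the unique element of `C_n` sending `f (g⁻¹ v)` to `f' v`; where both values
are `0` it is the identity, hence `σ_v = 1` for almost all `v`.
-/

namespace LampLighterGraph

variable {V : Type*} (T : SimpleGraph V) {n : ℕ} [NeZero n]

/-- A permutation of the vertices is an automorphism of `T` if it preserves adjacency. -/
def IsGraphAut (g : Equiv.Perm V) : Prop :=
  ∀ u w : V, T.Adj (g u) (g w) ↔ T.Adj u w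

def Adj1 (x y : (V →₀ Fin n) × T.edgeSet) : Prop :=
  x.1 = y.1 ∧ x.2 ≠ y.2 ∧ ∃ v : V, v ∈ (x.2 : Sym2 V) ∧ v ∈ (y.2 : Sym2 V)

def Adj2 (x y : (V →₀ Fin n) × T.edgeSet) : Prop :=
  x.2 = y.2 ∧ ∃ v : V, v ∈ (x.2 : Sym2 V) ∧ x.1 v ≠ y.1 v ∧ ∀ w : V, w ≠ v → x.1 w = y.1 w

/-- The action of an element `((σ_v), γ)` of the semi-restricted wreath product
`𝔖_n ≀^{𝔖_{n-1}}_{V_d} Aut(T_d)` on finitely supported functions: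
`f ↦ (v ↦ σ_v (f (γ⁻¹ v)))`. -/
noncomputable def wreathActFun (σf : V → Equiv.Perm (Fin n))
    (hσ : {v : V | σf v 0 ≠ 0}.Finite) (γ : Equiv.Perm V) (f : V →₀ Fin n) :
    V →₀ Fin n :=
  Finsupp.ofSupportFinite (fun v => σf v (f (γ⁻¹ v))) (by
    apply Set.Finite.subset (hσ.union ((f.support.finite_toSet).image γ))
    intro v hv
    simp only [Function.mem_support] at hv
    by_contra hc
    simp only [Set.mem_union, Set.mem_setOf_eq, not_or, not_not] at hc
    obtain ⟨h1, h2⟩ := hc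
    have hf : f (γ⁻¹ v) = 0 := by
      by_contra hf
      exact h2 ⟨γ⁻¹ v, by simpa using hf, by simp⟩
    exact hv (by rw [hf, h1]))

/-- The action of a tree automorphism on the edges of the tree. -/
def edgeMap (γ : Equiv.Perm V) (hγ : IsGraphAut T γ) (e : T.edgeSet) : T.edgeSet :=
  ⟨Sym2.map γ e.1, by
    obtain ⟨e, he⟩ := e
    induction e with
    | _ u w => simpa using (hγ u w).mpr he⟩

/-- The action of an element `((σ_v), γ)` of `G_{n,d}` on a vertex `(f, e)` of the
graph `X_{n,d}`:  `((σ_v), γ) · (f, e) = ((σ_v · f_{γ⁻¹ v}), γ e)`. -/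
noncomputable def wreathAct (σf : V → Equiv.Perm (Fin n))
    (hσ : {v : V | σf v 0 ≠ 0}.Finite) (γ : Equiv.Perm V) (hγ : IsGraphAut T γ)
    (x : (V →₀ Fin n) × T.edgeSet) : (V →₀ Fin n) × T.edgeSet :=
  (wreathActFun σf hσ γ x.1, edgeMap T γ hγ x.2)


section CyclicShift

variable {α : Type*} [AddCommGroupWithOne α] {c : Equiv.Perm α}

theorem pow_apply_of_forall_apply_eq_add_one (hc : ∀ i, c i = i + 1) (k : ℕ) (i : α) :
    (c ^ k) i = i + k := by
  induction k with
  | zero => simp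
  | succ k ih =>
    rw [pow_succ', Equiv.Perm.mul_apply, ih, hc, Nat.cast_succ, add_assoc]

theorem zpow_apply_of_forall_apply_eq_add_one (hc : ∀ i, c i = i + 1) (k : ℤ) (i : α) :
    (c ^ k) i = i + k := by
  obtain ⟨m, rfl | rfl⟩ := Int.eq_nat_or_neg k
  · simp [pow_apply_of_forall_apply_eq_add_one hc]
  · rw [zpow_neg, zpow_natCast, Equiv.Perm.inv_eq_iff_eq,
      pow_apply_of_forall_apply_eq_add_one hc]
    simp

theorem existsUnique_mem_zpowers_apply_eq (hc : ∀ i, c i = i + 1)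
    (hα : Function.Surjective (Int.cast : ℤ → α)) (a b : α) :
    ∃! σ, σ ∈ Subgroup.zpowers c ∧ σ a = b := by
  obtain ⟨k, hk⟩ := hα (b - a)
  refine ⟨c ^ k, ⟨Subgroup.zpow_mem_zpowers c k, ?_⟩, ?_⟩
  · rw [zpow_apply_of_forall_apply_eq_add_one hc, hk, add_sub_cancel]
  · rintro σ ⟨⟨l, rfl⟩, hl⟩
    have hlk : (l : α) = k := by
      rw [hk, ← hl, zpow_apply_of_forall_apply_eq_add_one hc, add_sub_cancel_left]
    ext i
    simp only [zpow_apply_of_forall_apply_eq_add_one hc, hlk]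

end CyclicShift

open Fin.CommRing in
theorem Fin.intCast_surjective {n : ℕ} [NeZero n] :
    Function.Surjective (Int.cast : ℤ → Fin n) :=
  fun a => ⟨a.val, by simp⟩

section WreathAction

@[simp]
theorem wreathAct_fst_apply (σf : V → Equiv.Perm (Fin n)) (hσ : {v : V | σf v 0 ≠ 0}.Finite)
    (γ : Equiv.Perm V) (hγ : IsGraphAut T γ) (x : (V →₀ Fin n) × T.edgeSet) (v : V) :
    (wreathAct T σf hσ γ hγ x).1 v = σf v (x.1 (γ⁻¹ v)) :=
  rfl

@[simp]
theorem wreathAct_snd (σf : V → Equiv.Perm (Fin n)) (hσ : {v : V | σf v 0 ≠ 0}.Finite)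
    (γ : Equiv.Perm V) (hγ : IsGraphAut T γ) (x : (V →₀ Fin n) × T.edgeSet) :
    (wreathAct T σf hσ γ hγ x).2 = edgeMap T γ hγ x.2 :=
  rfl

variable {S : Subgroup (Equiv.Perm (Fin n))}

theorem exists_wreathAct_eq (hS : ∀ a b : Fin n, ∃! σ, σ ∈ S ∧ σ a = b)
    {γ : Equiv.Perm V} (hγ : IsGraphAut T γ) {x y : (V →₀ Fin n) × T.edgeSet}
    (hxy : edgeMap T γ hγ x.2 = y.2) :
    ∃ (σf : V → Equiv.Perm (Fin n)) (_ : ∀ v, σf v ∈ S) (_ : {v | σf v ≠ 1}.Finite)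
      (hσ : {v : V | σf v 0 ≠ 0}.Finite), wreathAct T σf hσ γ hγ x = y := by
  choose σ hσ_spec hσ_unique using hS
  set σf : V → Equiv.Perm (Fin n) := fun v => σ (x.1 (γ⁻¹ v)) (y.1 v)
  -- Off the supports of `y.1` and `x.1 ∘ γ⁻¹`, `σf v` fixes `0`, so freeness forces `σf v = 1`.
  have hfin : {v | σf v ≠ 1}.Finite := by
    refine (y.1.support.finite_toSet.union
      (x.1.support.finite_toSet.preimage (γ⁻¹).injective.injOn)).subset fun v hv => ?_
    by_contra hout
    simp only [Set.mem_union, Set.mem_preimage, Finset.mem_coe, Finsupp.mem_support_iff,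
      not_or, not_not] at hout
    exact hv (by simp only [σf, hout.1, hout.2]; exact (hσ_unique 0 0 1 ⟨S.one_mem, rfl⟩).symm)
  have hσ : {v : V | σf v 0 ≠ 0}.Finite :=
    hfin.subset fun v hv h1 => hv (by rw [h1]; rfl)
  exact ⟨σf, fun v => (hσ_spec _ _).1, hfin, hσ,
    Prod.ext (Finsupp.ext fun v => (hσ_spec _ _).2) hxy⟩

theorem eq_of_wreathAct_eq (hS : ∀ a, ∀ σ ∈ S, ∀ τ ∈ S, σ a = τ a → σ = τ)
    {σf σf' : V → Equiv.Perm (Fin n)} (hσS : ∀ v, σf v ∈ S) (hσS' : ∀ v, σf' v ∈ S)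
    {hσ : {v : V | σf v 0 ≠ 0}.Finite} {hσ' : {v : V | σf' v 0 ≠ 0}.Finite}
    {γ : Equiv.Perm V} (hγ : IsGraphAut T γ) {x : (V →₀ Fin n) × T.edgeSet}
    (h : wreathAct T σf hσ γ hγ x = wreathAct T σf' hσ' γ hγ x) : σf = σf' :=
  funext fun v => hS _ _ (hσS v) _ (hσS' v) <| by
    simpa using congrArg (fun z => z.1 v) h

end WreathAction

theorem lamplighter_lattice_free_transitive_general {V : Type*} (T : SimpleGraph V)
    {n : ℕ} [NeZero n]
    (c0 : Equiv.Perm (Fin n)) (hc0 : ∀ i : Fin n, c0 i = i + 1)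
    (Q : Type*) [Group Q]
    (ψ : Q →* Equiv.Perm V) (haut : ∀ g : Q, IsGraphAut T (ψ g))
    (hfreeEdges : ∀ e e' : T.edgeSet, ∃! g : Q, edgeMap T (ψ g) (haut g) e = e') :
    ∀ x y : (V →₀ Fin n) × T.edgeSet,
      (∃ (σf : V → Equiv.Perm (Fin n)) (g : Q)
        (_ : ∀ v : V, σf v ∈ Subgroup.zpowers c0) (_ : {v : V | σf v ≠ 1}.Finite)
        (hσ : {v : V | σf v 0 ≠ 0}.Finite),
        wreathAct T σf hσ (ψ g) (haut g) x = y) ∧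
      (∀ (σf σf' : V → Equiv.Perm (Fin n)) (g g' : Q),
        (∀ v : V, σf v ∈ Subgroup.zpowers c0) → (∀ v : V, σf' v ∈ Subgroup.zpowers c0) →
        {v : V | σf v ≠ 1}.Finite → {v : V | σf' v ≠ 1}.Finite →
        ∀ (hσ : {v : V | σf v 0 ≠ 0}.Finite) (hσ' : {v : V | σf' v 0 ≠ 0}.Finite),
        wreathAct T σf hσ (ψ g) (haut g) x = y →
        wreathAct T σf' hσ' (ψ g') (haut g') x = y → σf = σf' ∧ g = g') := by
  intro x y
  open Fin.CommRing in
  have hC : ∀ a b : Fin n, ∃! σ, σ ∈ Subgroup.zpowers c0 ∧ σ a = b :=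
    existsUnique_mem_zpowers_apply_eq hc0 Fin.intCast_surjective
  obtain ⟨g, hg, hg_unique⟩ := hfreeEdges x.2 y.2
  refine ⟨?_, fun σf σf' g₁ g₂ hσS hσS' _ _ _ _ h₁ h₂ => ?_⟩
  · obtain ⟨σf, hσS, hfin, hσ, h⟩ := exists_wreathAct_eq T hC (haut g) hg
    exact ⟨σf, g, hσS, hfin, hσ, h⟩
  obtain rfl := hg_unique g₁ (congrArg Prod.snd h₁)
  obtain rfl := hg_unique g₂ (congrArg Prod.snd h₂)
  have hC_free : ∀ a, ∀ σ ∈ Subgroup.zpowers c0, ∀ τ ∈ Subgroup.zpowers c0, σ a = τ a → σ = τ :=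
    fun a σ hσ τ hτ hστ => (hC a (σ a)).unique ⟨hσ, rfl⟩ ⟨hτ, hστ.symm⟩
  exact ⟨eq_of_wreathAct_eq T hC_free hσS hσS' (haut _) (h₁.trans h₂.symm), rfl⟩

/-- The subgroup `Γ_{n,d} = C_n ≀_{V_d} (C_d ∗ C_d)` of `G_{n,d}` acts
freely and transitively on the vertices of the graph `X_{n,d}`. Here `C_d ∗ C_d`
(a group `Q` isomorphic to the free product of two cyclic groups of order `d`)
acts on the tree `T_d` as its Bass–Serre tree, i.e. by automorphisms acting freely
transitively on the edge set, and `C_n ≤ 𝔖_n` is the cyclic subgroup generated by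
the `n`-cycle `c0 = (0,1,…,n-1)`.  Elements of `Γ_{n,d}` are pairs `((σ_v), g)`
with `σ_v ∈ C_n` for all `v`, `σ_v = 1` almost everywhere, and `g ∈ Q`, acting via
`((σ_v), g) · ((f_v), e) = ((σ_v · f_{g⁻¹ v}), g e)`. -/
theorem lamplighter_lattice_free_transitive {V : Type*} (T : SimpleGraph V)
    (hT : T.IsTree) (d : ℕ) {n : ℕ} (hd : 3 ≤ d) (hn : 2 ≤ n) [NeZero n]
    (c0 : Equiv.Perm (Fin n)) (hc0 : ∀ i : Fin n, c0 i = i + 1)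
    (Q : Type*) [Group Q]
    (hQ : Nonempty (Q ≃* Monoid.Coprod (Multiplicative (ZMod d)) (Multiplicative (ZMod d))))
    (ψ : Q →* Equiv.Perm V) (haut : ∀ g : Q, IsGraphAut T (ψ g))
    (hfreeEdges : ∀ e e' : T.edgeSet, ∃! g : Q, edgeMap T (ψ g) (haut g) e = e') :
    ∀ x y : (V →₀ Fin n) × T.edgeSet,
      (∃ (σf : V → Equiv.Perm (Fin n)) (g : Q)
        (_ : ∀ v : V, σf v ∈ Subgroup.zpowers c0) (_ : {v : V | σf v ≠ 1}.Finite)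
        (hσ : {v : V | σf v 0 ≠ 0}.Finite),
        wreathAct T σf hσ (ψ g) (haut g) x = y) ∧
      (∀ (σf σf' : V → Equiv.Perm (Fin n)) (g g' : Q),
        (∀ v : V, σf v ∈ Subgroup.zpowers c0) → (∀ v : V, σf' v ∈ Subgroup.zpowers c0) →
        {v : V | σf v ≠ 1}.Finite → {v : V | σf' v ≠ 1}.Finite →
        ∀ (hσ : {v : V | σf v 0 ≠ 0}.Finite) (hσ' : {v : V | σf' v 0 ≠ 0}.Finite),
        wreathAct T σf hσ (ψ g) (haut g) x = y →
        wreathAct T σf' hσ' (ψ g') (haut g') x = y → σf = σf' ∧ g = g') :=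
  lamplighter_lattice_free_transitive_general T c0 hc0 Q ψ haut hfreeEdges

end LampLighterGraph
end

section
/- The restricted wreath product C_n ≀_{V_d} (C_d ∗ C_d) is isomorphic to a semidirect product (C_n² ≀ F_{d−1}) ⋊ C_d, where F_{d−1} is the free group of rank d−1. -/
/-!
The fold map `C_d ∗ C_d → C_d`, `a, b ↦ t`, is split by either free factor. Its kernel is free on
the Schreier generators `x_i = aⁱ b a⁻⁽ⁱ⁺¹⁾`, `i ∈ ℤ/d`, subject only to `x₀ x₁ ⋯ x_{d-1} = 1`, and
conjugation by `a` shifts `x_i` to `x_{i+1}`; so `C_d ∗ C_d ≅ F_{d-1} ⋊ C_d` with `C_d` rotating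
the `x_i`, the isomorphism being given explicitly in both directions. The free kernel acts simply
transitively on both orbits of vertices of the tree, so `⊕_{V_d} C_n ≅ ⊕_{F_{d-1}} C_n²`
equivariantly, and associativity of semidirect products gives
`C_n ≀ (F_{d-1} ⋊ C_d) ≅ (C_n² ≀ F_{d-1}) ⋊ C_d`.
-/

namespace WreathIso

variable (d n : ℕ)

/-- The free product `C_d ∗ C_d` of two cyclic groups of order `d`. -/
abbrev Q := Monoid.Coprod (Multiplicative (ZMod d)) (Multiplicative (ZMod d))

/-- The left free factor, as a subgroup of `C_d ∗ C_d`. -/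
abbrev Lf : Subgroup (Q d) := (Monoid.Coprod.inl : Multiplicative (ZMod d) →* Q d).range

/-- The right free factor, as a subgroup of `C_d ∗ C_d`. -/
abbrev Rf : Subgroup (Q d) := (Monoid.Coprod.inr : Multiplicative (ZMod d) →* Q d).range

/-- The vertex set of the Bass–Serre tree of `C_d ∗ C_d`: the disjoint union of the
two coset spaces of the free factors, with the natural `C_d ∗ C_d`-action. -/
abbrev Vd := (Q d ⧸ Lf d) ⊕ (Q d ⧸ Rf d)

/-- The action of `C_d ∗ C_d` on the vertices of its Bass–Serre tree, as permutations. -/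
def qperm (g : Q d) : Equiv.Perm (Vd d) :=
  Equiv.sumCongr (MulAction.toPerm g) (MulAction.toPerm g)

/-- The base group `⊕_{V_d} C_n` of the wreath product `C_n ≀_{V_d} (C_d ∗ C_d)`. -/
abbrev M1 := Multiplicative (Vd d →₀ ZMod n)

/-- The shift action of `C_d ∗ C_d` on `⊕_{V_d} C_n`. -/
noncomputable def phi1 : Q d →* MulAut (M1 d n) where
  toFun g := AddEquiv.toMultiplicative (Finsupp.domCongr (qperm d g))
  map_one' := by
    have h : qperm d 1 = 1 := by
      ext v; cases v <;> simp [qperm]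
    refine MulEquiv.ext fun f => ?_
    try dsimp only
    rw [h]
    show AddEquiv.toMultiplicative (Finsupp.domCongr (Equiv.refl _)) f = f
    rw [Finsupp.domCongr_refl]
    rfl
  map_mul' a b := by
    have h : qperm d (a * b) = qperm d a * qperm d b := by
      ext v; cases v <;> simp [qperm, mul_smul]
    refine MulEquiv.ext fun f => ?_
    try dsimp only
    rw [h]
    show AddEquiv.toMultiplicative (Finsupp.domCongr ((qperm d b).trans (qperm d a))) f = _
    rw [← Finsupp.domCongr_trans]
    rfl

/-- The restricted wreath product `C_n ≀_{V_d} (C_d ∗ C_d)`. -/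
abbrev W1 := SemidirectProduct (M1 d n) (Q d) (phi1 d n)

/-- The free group of rank `d - 1`. -/
abbrev Fr := FreeGroup (Fin (d - 1))

/-- The base group `⊕_{F_{d-1}} C_n²` of the wreath product `C_n² ≀ F_{d-1}`. -/
abbrev M2 := Multiplicative (Fr d →₀ (ZMod n × ZMod n))

/-- The translation action of `F_{d-1}` on `⊕_{F_{d-1}} C_n²`. -/
noncomputable def phi2 : Fr d →* MulAut (M2 d n) where
  toFun g := AddEquiv.toMultiplicative (Finsupp.domCongr (Equiv.mulLeft g))
  map_one' := by
    have h : (Equiv.mulLeft (1 : Fr d)) = Equiv.refl (Fr d) := by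
      ext v; simp
    refine MulEquiv.ext fun f => ?_
    try dsimp only
    rw [h, Finsupp.domCongr_refl]
    rfl
  map_mul' a b := by
    have h : (Equiv.mulLeft (a * b)) = (Equiv.mulLeft b).trans (Equiv.mulLeft a) := by
      ext v; simp [mul_assoc]
    refine MulEquiv.ext fun f => ?_
    try dsimp only
    rw [h, ← Finsupp.domCongr_trans]
    rfl

/-- The restricted wreath product `C_n² ≀ F_{d-1}`. -/
abbrev W2 := SemidirectProduct (M2 d n) (Fr d) (phi2 d n)

end WreathIso

namespace SemidirectProduct

variable {N A B : Type*} [Group N] [Group A] [Group B] {φ : B →* MulAut A}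
  (ρ : A ⋊[φ] B →* MulAut N)

theorem conj_inr_inl (b : B) (a : A) :
    (ρ (inl a)).trans (ρ (inr b)) = (ρ (inr b)).trans (ρ (inl (φ b a))) := by
  rw [← MulAut.mul_def, ← MulAut.mul_def, ← map_mul, ← map_mul, inl_aut]
  simp [mul_assoc]

def assocAction : B →* MulAut (N ⋊[ρ.comp inl] A) where
  toFun b := congr (ρ (inr b)) (φ b) (conj_inr_inl ρ b)
  map_one' := by ext <;> simp
  map_mul' b c := by ext <;> simp [MulAut.mul_apply]

def assoc : N ⋊[ρ] (A ⋊[φ] B) ≃* (N ⋊[ρ.comp inl] A) ⋊[assocAction ρ] B where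
  toFun p := ⟨⟨p.left, p.right.left⟩, p.right.right⟩
  invFun p := ⟨p.left.left, ⟨p.left.right, p.right⟩⟩
  left_inv p := rfl
  right_inv p := rfl
  map_mul' p q := by
    refine SemidirectProduct.ext (SemidirectProduct.ext ?_ rfl) rfl
    show p.left * ρ p.right q.left = p.left * ρ (inl p.right.left) (ρ (inr p.right.right) q.left)
    rw [← MulAut.mul_apply, ← map_mul, inl_left_mul_inr_right]

end SemidirectProduct

namespace ZMod

variable {d : ℕ} [NeZero d] {G : Type*} [Monoid G]

def powHom (g : G) (hg : g ^ d = 1) : Multiplicative (ZMod d) →* G where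
  toFun c := g ^ c.toAdd.val
  map_one' := by simp
  map_mul' x y := by
    simp only [toAdd_mul, ZMod.val_add, ← pow_eq_pow_mod _ hg, pow_add]

theorem powHom_ofAdd (g : G) (hg : g ^ d = 1) (m : ZMod d) :
    powHom g hg (.ofAdd m) = g ^ m.val := rfl

theorem powHom_ofAdd_one (g : G) (hg : g ^ d = 1) : powHom g hg (.ofAdd 1) = g := by
  rw [powHom_ofAdd, val_one_eq_one_mod, ← pow_eq_pow_mod _ hg, pow_one]

end ZMod

theorem MonoidHom.ext_mzmod {d : ℕ} [NeZero d] {G : Type*} [Monoid G]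
    {f g : Multiplicative (ZMod d) →* G}
    (h : f (.ofAdd 1) = g (.ofAdd 1)) : f = g := by
  refine MonoidHom.ext fun x => ?_
  rw [← ofAdd_toAdd x, ← ZMod.natCast_zmod_val x.toAdd, ← mul_one (x.toAdd.val : ZMod d),
    ← nsmul_eq_mul, ofAdd_nsmul, map_pow, map_pow, h]

def MonoidHom.toMulAut {G M : Type*} [Group G] [Monoid M] (φ : G →* Monoid.End M) :
    G →* MulAut M where
  toFun g :=
    { toFun := φ g
      invFun := φ g⁻¹
      left_inv x := show (φ g⁻¹ * φ g) x = x by rw [← map_mul, inv_mul_cancel, map_one]; rfl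
      right_inv x := show (φ g * φ g⁻¹) x = x by rw [← map_mul, mul_inv_cancel, map_one]; rfl
      map_mul' := map_mul (φ g) }
  map_one' := MulEquiv.ext fun x => show φ 1 x = x by rw [map_one]; rfl
  map_mul' g h := MulEquiv.ext fun x => show φ (g * h) x = φ g (φ h x) by rw [map_mul]; rfl

theorem MonoidHom.toMulAut_apply {G M : Type*} [Group G] [Monoid M] (φ : G →* Monoid.End M)
    (g : G) (x : M) : φ.toMulAut g x = φ g x := rfl

theorem QuotientGroup.bijective_mk_comp_of_range_eq_ker {F G H : Type*} [Group F] [Group G]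
    [Group H] {j : F →* G} (hj : Function.Injective j) {r : G →* H} (hjr : j.range = r.ker)
    {ι : H →* G} (hι : r.comp ι = .id H) :
    Function.Bijective fun x => (j x : G ⧸ ι.range) := by
  have hrι (c : H) : r (ι c) = c := DFunLike.congr_fun hι c
  have hrj (x : F) : r (j x) = 1 := by
    rw [← MonoidHom.mem_ker, ← hjr]; exact ⟨x, rfl⟩
  constructor
  · intro x y hxy
    obtain ⟨c, hc⟩ := QuotientGroup.eq.mp hxy
    have hc1 : c = 1 := by
      simpa [hrι, hrj] using congrArg r hc
    rw [hc1, map_one, eq_comm, ← map_inv, ← map_mul, ← map_one j] at hc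
    exact inv_mul_eq_one.mp (hj hc)
  · intro q
    induction q using QuotientGroup.induction_on with | H g => ?_
    obtain ⟨x, hx⟩ : g * (ι (r g))⁻¹ ∈ j.range := by
      rw [hjr, MonoidHom.mem_ker, map_mul, map_inv, hrι, mul_inv_cancel]
    refine ⟨x, QuotientGroup.eq.mpr ⟨r g, ?_⟩⟩
    simp [hx]

noncomputable def Finsupp.prodAddEquiv {α M N : Type*} [AddCommMonoid M] [AddCommMonoid N] :
    (α →₀ M) × (α →₀ N) ≃+ (α →₀ M × N) where
  toFun p := Finsupp.zipWith Prod.mk rfl p.1 p.2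
  invFun f := (f.mapRange Prod.fst rfl, f.mapRange Prod.snd rfl)
  left_inv p := by ext <;> simp
  right_inv f := by ext <;> simp
  map_add' p q := by ext <;> simp

theorem Finsupp.prodAddEquiv_apply {α M N : Type*} [AddCommMonoid M] [AddCommMonoid N]
    (p : (α →₀ M) × (α →₀ N)) (a : α) : Finsupp.prodAddEquiv p a = (p.1 a, p.2 a) := rfl

namespace WreathIso

open Monoid SemidirectProduct

section Generators

variable {d : ℕ}

def partialProd {G : Type*} [Monoid G] (y : ZMod d → G) (k : ℕ) : G :=
  ((List.range k).map fun j : ℕ => y j).prod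

theorem partialProd_succ {G : Type*} [Monoid G] (y : ZMod d → G) (k : ℕ) :
    partialProd y (k + 1) = partialProd y k * y k := by
  simp [partialProd, List.range_succ]

theorem partialProd_shift_eq_one [NeZero d] {G : Type*} [Group G] {y : ZMod d → G}
    (hy : partialProd y d = 1) : partialProd (fun i => y (i + 1)) d = 1 := by
  obtain ⟨m, rfl⟩ : ∃ m, d = m + 1 := ⟨d - 1, (Nat.succ_pred_eq_of_ne_zero (NeZero.ne d)).symm⟩
  rw [partialProd, List.range_succ_eq_map, List.map_cons, List.prod_cons, List.map_map] at hy
  rw [partialProd_succ, partialProd, ← mul_eq_one_comm.mp hy]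
  congr 2
  · ext j; simp
  · push_cast; simp

theorem natCast_pred [NeZero d] : ((d - 1 : ℕ) : ZMod d) = -1 := by
  rw [Nat.cast_pred (Nat.pos_of_neZero d), ZMod.natCast_self, zero_sub]

variable (d) in
/-- The generators `x_i`, `i ∈ ZMod d`, of `F_{d-1}`: a basis `x₀, …, x_{d-2}` completed by the
relation `x₀ x₁ ⋯ x_{d-1} = 1`. -/
def gen (i : ZMod d) : Fr d :=
  if h : i.val < d - 1 then FreeGroup.of ⟨i.val, h⟩
  else ((List.finRange (d - 1)).map FreeGroup.of).prod⁻¹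

theorem gen_val (j : Fin (d - 1)) : gen d (j : ℕ) = FreeGroup.of j := by
  have hval : ((j : ℕ) : ZMod d).val = j := ZMod.val_cast_of_lt (by omega)
  simp only [gen, hval, dif_pos j.2]

theorem gen_pred [NeZero d] : gen d (-1) = ((List.finRange (d - 1)).map FreeGroup.of).prod⁻¹ := by
  have hval : (-1 : ZMod d).val = d - 1 := by
    rw [← natCast_pred, ZMod.val_cast_of_lt (Nat.sub_lt (Nat.pos_of_neZero d) one_pos)]
  rw [gen, dif_neg (by omega)]

theorem lift_prod_finRange {G : Type*} [Group G] (y : ZMod d → G) :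
    FreeGroup.lift (fun j : Fin (d - 1) => y j) ((List.finRange (d - 1)).map FreeGroup.of).prod
      = partialProd y (d - 1) := by
  rw [map_list_prod, List.map_map, partialProd, ← List.map_coe_finRange_eq_range, List.map_map]
  congr 1
  exact List.map_congr_left fun j _ => FreeGroup.lift_apply_of

theorem partialProd_card_eq_mul [NeZero d] {G : Type*} [Monoid G] (y : ZMod d → G) :
    partialProd y d = partialProd y (d - 1) * y (-1) := by
  rw [← natCast_pred, ← partialProd_succ, Nat.sub_add_cancel NeZero.one_le]

theorem partialProd_gen [NeZero d] : partialProd (gen d) d = 1 := by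
  have hW := lift_prod_finRange (gen d)
  simp only [gen_val, FreeGroup.lift_of_eq_id, MonoidHom.id_apply] at hW
  rw [partialProd_card_eq_mul, gen_pred, hW, mul_inv_cancel]

theorem lift_gen [NeZero d] {G : Type*} [Group G] (y : ZMod d → G) (hy : partialProd y d = 1)
    (i : ZMod d) : FreeGroup.lift (fun j : Fin (d - 1) => y j) (gen d i) = y i := by
  by_cases hi : i.val < d - 1
  · rw [gen, dif_pos hi, FreeGroup.lift_apply_of, ZMod.natCast_zmod_val]
  · obtain rfl : i = -1 := by
      rw [← natCast_pred, ← ZMod.natCast_zmod_val i]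
      congr 1
      have := ZMod.val_lt i
      omega
    rw [gen_pred, map_inv, lift_prod_finRange, inv_eq_iff_mul_eq_one, ← partialProd_card_eq_mul, hy]

end Generators

section Rotation

variable {d : ℕ} [NeZero d]

variable (d) in
def rot : Monoid.End (Fr d) := FreeGroup.lift fun j : Fin (d - 1) => gen d (j + 1)

theorem rot_gen (i : ZMod d) : rot d (gen d i) = gen d (i + 1) :=
  lift_gen (fun i => gen d (i + 1)) (partialProd_shift_eq_one partialProd_gen) i

theorem rot_pow_gen (k : ℕ) (i : ZMod d) : (rot d ^ k) (gen d i) = gen d (i + k) := by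
  induction k with
  | zero => simp
  | succ k ih =>
    rw [pow_succ', Monoid.End.coe_mul, Function.comp_apply, ih, rot_gen, Nat.cast_succ, add_assoc]

theorem rot_pow_card : rot d ^ d = 1 :=
  FreeGroup.ext_hom (M := Fr d) (rot d ^ d) (MonoidHom.id _) fun j => by
    have h := rot_pow_gen d ((j : ℕ) : ZMod d)
    rw [ZMod.natCast_self, add_zero, gen_val] at h
    exact h

variable (d) in
def rotAction : Multiplicative (ZMod d) →* MulAut (Fr d) :=
  (ZMod.powHom (rot d) rot_pow_card).toMulAut

theorem rotAction_gen (m i : ZMod d) : rotAction d (.ofAdd m) (gen d i) = gen d (i + m) := by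
  rw [rotAction, MonoidHom.toMulAut_apply, ZMod.powHom_ofAdd, rot_pow_gen, ZMod.natCast_zmod_val]

variable (d) in
abbrev FrSd := Fr d ⋊[rotAction d] Multiplicative (ZMod d)

end Rotation

section FreeProduct

variable {d : ℕ}

variable (d) in
def qa (m : ZMod d) : Q d := Coprod.inl (.ofAdd m)

variable (d) in
def qb (m : ZMod d) : Q d := Coprod.inr (.ofAdd m)

theorem qa_add (x y : ZMod d) : qa d (x + y) = qa d x * qa d y := map_mul Coprod.inl _ _

theorem qb_add (x y : ZMod d) : qb d (x + y) = qb d x * qb d y := map_mul Coprod.inr _ _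

theorem qa_zero : qa d 0 = 1 := map_one Coprod.inl

theorem qb_zero : qb d 0 = 1 := map_one Coprod.inr

theorem qa_neg (x : ZMod d) : qa d (-x) = (qa d x)⁻¹ := map_inv Coprod.inl _

variable (d) in
def qx (i : ZMod d) : Q d := qa d i * qb d 1 * qa d (-(i + 1))

theorem qx_conj (m i : ZMod d) : qa d m * qx d i * (qa d m)⁻¹ = qx d (i + m) := by
  simp only [qx, ← qa_neg, mul_assoc, ← qa_add]
  rw [← mul_assoc (qa d m), ← qa_add, add_comm m i, ← neg_add, add_right_comm]

theorem partialProd_qx (k : ℕ) : partialProd (qx d) k = qb d k * qa d (-k) := by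
  induction k with
  | zero => simp [partialProd, qa_zero, qb_zero]
  | succ k ih =>
    rw [partialProd_succ, ih, qx]
    simp only [mul_assoc]
    rw [← mul_assoc (qa d _), ← qa_add, neg_add_cancel, qa_zero, one_mul, ← mul_assoc, ← qb_add]
    push_cast
    rfl

theorem partialProd_qx_card : partialProd (qx d) d = 1 := by
  rw [partialProd_qx, ZMod.natCast_self, neg_zero, qa_zero, qb_zero, mul_one]

end FreeProduct

section FreeProductIso

variable {d : ℕ} [NeZero d]

variable (d) in
def freeEmb : Fr d →* Q d := FreeGroup.lift fun j : Fin (d - 1) => qx d j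

theorem freeEmb_gen (i : ZMod d) : freeEmb d (gen d i) = qx d i :=
  lift_gen (qx d) partialProd_qx_card i

theorem freeEmb_rotAction (c : Multiplicative (ZMod d)) :
    (freeEmb d).comp (rotAction d c).toMonoidHom
      = (MulAut.conj (Coprod.inl c)).toMonoidHom.comp (freeEmb d) :=
  FreeGroup.ext_hom _ _ fun j => by
    simp only [MonoidHom.comp_apply, MulEquiv.coe_toMonoidHom, MulAut.conj_apply, ← gen_val]
    rw [← ofAdd_toAdd c, rotAction_gen, freeEmb_gen, freeEmb_gen, ← qx_conj]
    rfl

variable (d) in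
def ofFrSd : FrSd d →* Q d := SemidirectProduct.lift (freeEmb d) Coprod.inl freeEmb_rotAction

variable (d) in
def bImage : FrSd d := ⟨gen d 0, .ofAdd 1⟩

theorem bImage_pow (k : ℕ) : bImage d ^ k = ⟨partialProd (gen d) k, .ofAdd (k : ZMod d)⟩ := by
  induction k with
  | zero => ext <;> simp [partialProd]
  | succ k ih =>
    rw [pow_succ, ih]
    ext
    · simp [bImage, mul_left, rotAction_gen, partialProd_succ]
    · simp [bImage, mul_right, ← ofAdd_add]

theorem bImage_pow_card : bImage d ^ d = 1 := by
  rw [bImage_pow, partialProd_gen, ZMod.natCast_self]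
  rfl

variable (d) in
def toFrSd : Q d →* FrSd d := Coprod.lift inr (ZMod.powHom (bImage d) bImage_pow_card)

theorem toFrSd_qb_one : toFrSd d (qb d 1) = bImage d := by
  rw [qb, toFrSd, Coprod.lift_apply_inr, ZMod.powHom_ofAdd_one]

theorem toFrSd_qx (i : ZMod d) : toFrSd d (qx d i) = inl (gen d i) := by
  simp only [qx, qa, map_mul, toFrSd_qb_one]
  ext
  · simp [toFrSd, bImage, mul_left, rotAction_gen]
  · simp [toFrSd, bImage, mul_right, ← ofAdd_add]

theorem toFrSd_comp_ofFrSd : (toFrSd d).comp (ofFrSd d) = .id _ := by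
  refine SemidirectProduct.hom_ext (FreeGroup.ext_hom _ _ fun j => ?_) (MonoidHom.ext_mzmod ?_)
  · simp [ofFrSd, ← gen_val, freeEmb_gen, toFrSd_qx]
  · simp [ofFrSd, toFrSd]

theorem ofFrSd_comp_toFrSd : (ofFrSd d).comp (toFrSd d) = .id _ := by
  refine Coprod.hom_ext (MonoidHom.ext_mzmod ?_) (MonoidHom.ext_mzmod ?_)
  · simp [ofFrSd, toFrSd]
  · change ofFrSd d (toFrSd d (qb d 1)) = qb d 1
    rw [toFrSd_qb_one]
    simp only [bImage, ofFrSd, mk_eq_inl_mul_inr, map_mul, lift_inl, lift_inr, freeEmb_gen, qx,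
      zero_add, qa_zero, one_mul]
    change qb d 1 * qa d (-1) * qa d 1 = qb d 1
    rw [mul_assoc, ← qa_add, neg_add_cancel, qa_zero, mul_one]

variable (d) in
def coprodEquiv : Q d ≃* FrSd d :=
  MonoidHom.toMulEquiv _ _ ofFrSd_comp_toFrSd toFrSd_comp_ofFrSd

theorem coprodEquiv_symm_inl (x : Fr d) : (coprodEquiv d).symm (inl x) = freeEmb d x :=
  lift_inl _ _ freeEmb_rotAction x

theorem freeEmb_injective : Function.Injective (freeEmb d) := fun x y h =>
  inl_injective <| (coprodEquiv d).symm.injective <| by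
    rw [coprodEquiv_symm_inl, coprodEquiv_symm_inl, h]

end FreeProductIso

section Fold

variable {d : ℕ} [NeZero d]

variable (d) in
def fold : Q d →* Multiplicative (ZMod d) := Coprod.lift (.id _) (.id _)

theorem rightHom_comp_toFrSd : rightHom.comp (toFrSd d) = fold d := by
  refine Coprod.hom_ext (MonoidHom.ext_mzmod ?_) (MonoidHom.ext_mzmod ?_)
  · simp [toFrSd, fold]
  · change rightHom (toFrSd d (qb d 1)) = fold d (qb d 1)
    rw [toFrSd_qb_one]
    rfl

theorem range_freeEmb : (freeEmb d).range = (fold d).ker := by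
  refine le_antisymm ((MonoidHom.range_le_ker_iff _ _).mpr (FreeGroup.ext_hom _ _ fun j => ?_))
    fun q hq => ?_
  · simp [← gen_val, freeEmb_gen, qx, qa, qb, fold, ← ofAdd_add]
  · have hright : (toFrSd d q).right = 1 := by
      rw [← rightHom_eq_right, ← MonoidHom.comp_apply, rightHom_comp_toFrSd]
      exact hq
    refine ⟨(toFrSd d q).left, ?_⟩
    rw [← coprodEquiv_symm_inl, MulEquiv.symm_apply_eq]
    ext
    · rfl
    · exact hright.symm

end Fold

section Vertices

variable {d n : ℕ} [NeZero d]

variable (d) in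
noncomputable def vertexEquiv : Fr d ⊕ Fr d ≃ Vd d :=
  .sumCongr
    (.ofBijective (fun x => (freeEmb d x : Q d ⧸ Lf d))
      (QuotientGroup.bijective_mk_comp_of_range_eq_ker freeEmb_injective range_freeEmb
        (Coprod.lift_comp_inl _ _)))
    (.ofBijective (fun x => (freeEmb d x : Q d ⧸ Rf d))
      (QuotientGroup.bijective_mk_comp_of_range_eq_ker freeEmb_injective range_freeEmb
        (Coprod.lift_comp_inr _ _)))

theorem vertexEquiv_inl (x : Fr d) :
    vertexEquiv d (.inl x) = .inl (freeEmb d x : Q d ⧸ Lf d) := rfl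

theorem vertexEquiv_inr (x : Fr d) :
    vertexEquiv d (.inr x) = .inr (freeEmb d x : Q d ⧸ Rf d) := rfl

theorem qperm_freeEmb_vertexEquiv (x : Fr d) (v : Fr d ⊕ Fr d) :
    qperm d (freeEmb d x) (vertexEquiv d v) = vertexEquiv d (Sum.map (x * ·) (x * ·) v) := by
  cases v with
  | inl y => rw [Sum.map_inl, vertexEquiv_inl, vertexEquiv_inl, map_mul]; rfl
  | inr y => rw [Sum.map_inr, vertexEquiv_inr, vertexEquiv_inr, map_mul]; rfl

variable (d n) in
noncomputable def baseAddEquiv : (Vd d →₀ ZMod n) ≃+ (Fr d →₀ ZMod n × ZMod n) :=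
  (Finsupp.domCongr (vertexEquiv d).symm).trans
    (Finsupp.sumFinsuppAddEquivProdFinsupp.trans Finsupp.prodAddEquiv)

theorem baseAddEquiv_apply (f : Vd d →₀ ZMod n) (y : Fr d) :
    baseAddEquiv d n f y = (f (vertexEquiv d (.inl y)), f (vertexEquiv d (.inr y))) := by
  simp [baseAddEquiv, Finsupp.prodAddEquiv_apply]

theorem baseAddEquiv_domCongr_qperm (x : Fr d) (f : Vd d →₀ ZMod n) :
    baseAddEquiv d n (Finsupp.domCongr (qperm d (freeEmb d x)) f)
      = Finsupp.domCongr (Equiv.mulLeft x) (baseAddEquiv d n f) := by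
  refine Finsupp.ext fun y => ?_
  have hsymm (v : Fr d ⊕ Fr d) : (qperm d (freeEmb d x)).symm (vertexEquiv d v)
      = vertexEquiv d (Sum.map (x⁻¹ * ·) (x⁻¹ * ·) v) := by
    rw [Equiv.symm_apply_eq, qperm_freeEmb_vertexEquiv]
    cases v <;> simp
  simp [baseAddEquiv_apply, Finsupp.domCongr_apply, hsymm]

end Vertices

section Assembly

variable {d n : ℕ} [NeZero d]

variable (d n) in
noncomputable def frSdAction : FrSd d →* MulAut (M1 d n) :=
  (phi1 d n).comp (coprodEquiv d).symm.toMonoidHom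

theorem frSdAction_inl (x : Fr d) : frSdAction d n (inl x) = phi1 d n (freeEmb d x) := by
  rw [frSdAction, MonoidHom.comp_apply, MulEquiv.coe_toMonoidHom, coprodEquiv_symm_inl]

variable (d n) in
noncomputable def innerEquiv : M1 d n ⋊[(frSdAction d n).comp inl] Fr d ≃* W2 d n :=
  SemidirectProduct.congr (AddEquiv.toMultiplicative (baseAddEquiv d n)) (.refl _) fun x => by
    refine MulEquiv.ext fun m => ?_
    rw [MulEquiv.trans_apply, MulEquiv.trans_apply, MonoidHom.comp_apply, frSdAction_inl]
    exact baseAddEquiv_domCongr_qperm x m.toAdd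

variable (d n) in
noncomputable def wreathEquivFrSd : W1 d n ≃* M1 d n ⋊[frSdAction d n] FrSd d :=
  SemidirectProduct.congr (.refl _) (coprodEquiv d) fun q => by ext; simp [frSdAction]

end Assembly

variable (d n : ℕ)

theorem wreath_product_decomposition (hd : 3 ≤ d) :
    ∃ ψ : Multiplicative (ZMod d) →* MulAut (W2 d n),
      Nonempty (W1 d n ≃* SemidirectProduct (W2 d n) (Multiplicative (ZMod d)) ψ) := by
  have : NeZero d := ⟨by omega⟩
  exact ⟨_, ⟨(wreathEquivFrSd d n).trans ((SemidirectProduct.assoc _).trans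
    (SemidirectProduct.congr' (innerEquiv d n) (.refl _)))⟩⟩

end WreathIso
end

section
/- Let F ≤ F′ ≤ Sym(Ω), let n = [F′ : F], and let α : F′ → 𝔖_n be the homomorphism induced by the action of F′ on the coset space F′/F (with a chosen bijection F′/F ≅ {0,…,n−1} sending the coset F to 0). Define, for γ ∈ G(F,F′) and v ∈ V_d, ρ_{γ,v} = α(σ(γ, γ⁻¹v)). Then the map φ : G(F,F′) → G_{n,d}, γ ↦ ((ρ_{γ,v})_{v∈V_d}, γ), is a well-defined injective group homomorphism. -/
namespace PrescribedLocalAction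

open scoped Classical

variable {V Ω : Type*}

/-- A permutation of the vertices is an automorphism of `T` if it preserves adjacency. -/
def IsGraphAut (T : SimpleGraph V) (g : Equiv.Perm V) : Prop :=
  ∀ u w : V, T.Adj (g u) (g w) ↔ T.Adj u w

/-- Membership in the group `G(F,F')` of tree automorphisms whose local
permutations lie in `F'` everywhere and in `F` almost everywhere. -/
def MemGFF (T : SimpleGraph V) (σ : Equiv.Perm V → V → Equiv.Perm Ω)
    (F F' : Subgroup (Equiv.Perm Ω)) (g : Equiv.Perm V) : Prop :=
  IsGraphAut T g ∧ (∀ v : V, σ g v ∈ F') ∧ {v : V | σ g v ∉ F}.Finite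

/-- The homomorphism `α : F' → 𝔖_n` induced by the action of `F'` on the coset
space `F'/F ≅ {0,…,n-1}` (extended by `1` outside `F'`). -/
noncomputable def alpha' (F F' : Subgroup (Equiv.Perm Ω)) (n : ℕ)
    (e : (F' ⧸ F.subgroupOf F') ≃ Fin n) (π : Equiv.Perm Ω) : Equiv.Perm (Fin n) :=
  if h : π ∈ F' then Equiv.permCongr e (MulAction.toPerm (⟨π, h⟩ : F')) else 1

/-- The cocycle `ρ_{γ,v} = α(σ(γ, γ⁻¹ v))`. -/
noncomputable def rho (σ : Equiv.Perm V → V → Equiv.Perm Ω)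
    (F F' : Subgroup (Equiv.Perm Ω)) (n : ℕ)
    (e : (F' ⧸ F.subgroupOf F') ≃ Fin n) (γ : Equiv.Perm V) (v : V) :
    Equiv.Perm (Fin n) :=
  alpha' F F' n e (σ γ (γ⁻¹ v))


/-- Let `F ≤ F' ≤ Sym(Ω)`, `n = [F' : F]`, and let
`α : F' → 𝔖_n` be the homomorphism induced by the action of `F'` on `F'/F`
(with a bijection `e : F'/F ≃ {0,…,n-1}` sending the coset `F` to `0`).
For `γ ∈ G(F,F')` set `ρ_{γ,v} = α(σ(γ, γ⁻¹ v))`.  Then the map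
`φ : G(F,F') → G_{n,d} = 𝔖_n^{V_d,𝔖_{n-1}} ⋊ Aut(T_d)`, `γ ↦ ((ρ_{γ,v})_v, γ)`,
is a well-defined injective group homomorphism: `ρ_γ` fixes `0` almost everywhere
(well-definedness), `φ` intertwines composition with the semidirect product
multiplication `(ρ,γ)(ρ',γ') = ((ρ_v ρ'_{γ⁻¹v})_v, γγ')`, and `φ` is injective. -/
theorem embeds_into_semirestricted_wreath {V Ω : Type*} (T : SimpleGraph V)
    (hT : T.IsTree) (c : V → V → Ω)
    (hsym : ∀ u w : V, c u w = c w u)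
    (hbij : ∀ v : V, Set.BijOn (fun w => c v w) (T.neighborSet v) Set.univ)
    (σ : Equiv.Perm V → V → Equiv.Perm Ω)
    (hσ : ∀ g : Equiv.Perm V, IsGraphAut T g →
      ∀ v w : V, T.Adj v w → σ g v (c v w) = c (g v) (g w))
    (F F' : Subgroup (Equiv.Perm Ω)) (hle : F ≤ F')
    (n : ℕ) [NeZero n] (hn : (F.subgroupOf F').index = n)
    (e : (F' ⧸ F.subgroupOf F') ≃ Fin n)
    (he : e ((1 : F') : F' ⧸ F.subgroupOf F') = 0) :
    (∀ γ : Equiv.Perm V, MemGFF T σ F F' γ →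
      {v : V | rho σ F F' n e γ v 0 ≠ 0}.Finite) ∧
    (∀ γ γ' : Equiv.Perm V, MemGFF T σ F F' γ → MemGFF T σ F F' γ' →
      ∀ v : V, rho σ F F' n e (γ * γ') v =
        rho σ F F' n e γ v * rho σ F F' n e γ' (γ⁻¹ v)) ∧
    (∀ γ γ' : Equiv.Perm V, MemGFF T σ F F' γ → MemGFF T σ F F' γ' →
      ((fun v => rho σ F F' n e γ v), γ) = ((fun v => rho σ F F' n e γ' v), γ') →
      γ = γ') := by
  classical
  have autMul : ∀ g h : Equiv.Perm V, IsGraphAut T g → IsGraphAut T h →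
      IsGraphAut T (g * h) := by
    intro g h hg hh u w
    simp only [Equiv.Perm.mul_apply]
    rw [hg, hh]
  have cocycle : ∀ g h : Equiv.Perm V, IsGraphAut T g → IsGraphAut T h →
      ∀ v : V, σ (g * h) v = σ g (h v) * σ h v := by
    intro g h hg hh v
    ext ω
    obtain ⟨w, hw, hcw⟩ := (hbij v).2.2 (Set.mem_univ ω)
    have hadj : T.Adj v w := hw
    have h1 := hσ (g * h) (autMul g h hg hh) v w hadj
    have h2 := hσ h hh v w hadj
    have hadj' : T.Adj (h v) (h w) := (hh v w).mpr hadj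
    have h3 := hσ g hg (h v) (h w) hadj'
    simp only at hcw
    simp only [Equiv.Perm.mul_apply] at h1 ⊢
    rw [← hcw, h1, h2, h3]
  have alphaMul : ∀ π π' : Equiv.Perm Ω, π ∈ F' → π' ∈ F' →
      alpha' F F' n e (π * π') = alpha' F F' n e π * alpha' F F' n e π' := by
    intro π π' hπ hπ'
    have hm : π * π' ∈ F' := mul_mem hπ hπ'
    simp only [alpha', dif_pos hπ, dif_pos hπ', dif_pos hm]
    ext x
    simp only [Equiv.Perm.mul_apply, Equiv.permCongr_apply, Equiv.symm_apply_apply,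
      MulAction.toPerm_apply]
    rw [show (⟨π * π', hm⟩ : F') = ⟨π, hπ⟩ * ⟨π', hπ'⟩ from rfl, mul_smul]
  have alphaZero : ∀ π : Equiv.Perm Ω, π ∈ F → alpha' F F' n e π 0 = 0 := by
    intro π hπ
    have hπ' : π ∈ F' := hle hπ
    simp only [alpha', dif_pos hπ', Equiv.permCongr_apply, MulAction.toPerm_apply]
    have h0 : e.symm 0 = ((1 : F') : F' ⧸ F.subgroupOf F') := by
      rw [Equiv.symm_apply_eq, he]
    rw [h0]
    have hsm : (⟨π, hπ'⟩ : F') • ((1 : F') : F' ⧸ F.subgroupOf F') =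
        ((⟨π, hπ'⟩ : F') : F' ⧸ F.subgroupOf F') := by
      rw [show ((1 : F') : F' ⧸ F.subgroupOf F') = QuotientGroup.mk (1 : F') from rfl]
      rw [MulAction.Quotient.smul_mk, smul_eq_mul, mul_one]
    rw [hsm, show ((⟨π, hπ'⟩ : F') : F' ⧸ F.subgroupOf F') =
        ((1 : F') : F' ⧸ F.subgroupOf F') from ?_, he]
    rw [QuotientGroup.eq]
    simp only [Subgroup.mem_subgroupOf]
    simpa using inv_mem hπ
  refine ⟨?_, ?_, ?_⟩
  · intro γ hγ
    have hsub : {v : V | rho σ F F' n e γ v 0 ≠ 0} ⊆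
        (fun v => γ⁻¹ v) ⁻¹' {v : V | σ γ v ∉ F} := by
      intro v hv
      simp only [Set.mem_preimage, Set.mem_setOf_eq]
      intro hF
      exact hv (alphaZero _ hF)
    exact Set.Finite.subset (hγ.2.2.preimage (Equiv.injective γ⁻¹).injOn) hsub
  · intro γ γ' hγ hγ' v
    have hkey := cocycle γ γ' hγ.1 hγ'.1 ((γ * γ')⁻¹ v)
    have h1 : γ' ((γ * γ')⁻¹ v) = γ⁻¹ v := by
      simp [mul_inv_rev]
    have h2 : (γ * γ')⁻¹ v = γ'⁻¹ (γ⁻¹ v) := by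
      simp [mul_inv_rev]
    rw [h1] at hkey
    simp only [rho]
    rw [hkey, alphaMul _ _ (hγ.2.1 _) (hγ'.2.1 _), h2]
  · intro γ γ' _ _ h
    exact congrArg Prod.snd h

end PrescribedLocalAction
end

section
/- Let F ≨ F′ ≤ Sym(Ω). Then the group K(F,F′), the stabilizer of a vertex v₀ of T_d in G(F,F′), is an ICC group: every non-trivial element of K(F,F′) has an infinite conjugacy class in K(F,F′). -/
namespace PrescribedLocalAction

open scoped Classical

variable {V Ω : Type*}

/-!
Vertices are coded by the reduced colour words of their geodesics from `v₀`. Take `π ≠ 1` in `F'`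
fixing a colour `a₀` (correct an element of `F' \ F` by an element of `F`), and for each colour `b`
some `f b ∈ F` with `f b b = π b`. At a vertex `q` entered along colour `a₀`, the twist acting by
`π` at `q` and by `f b` on the branch through the `b`-child of `q` lies in `K(F,F')`; it fixes every
vertex no farther from `v₀` than `q`, and moves the `β`-child of `q` when `π β ≠ β`.

If `γ ∈ K(F,F')` moves `u`, then `γ⁻¹` carries the branch at `γ u` into the disjoint branch at `u`.
So twists `k_j` at vertices `q_j` of increasing depth below `γ u` fix `γ⁻¹ s` for the `β`-child `s`
of `q_i`, and `k_j γ k_j⁻¹ (γ⁻¹ s) = k_j s` equals `s` for `j > i` but not for `j = i`: the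
conjugates are pairwise distinct. Three colours are needed to descend indefinitely below `γ u`
through edges of colour `a₀`.
-/

open SimpleGraph

theorem exists_ne_ne_of_three_le_natCard {α : Type*} (h : 3 ≤ Nat.card α) (x y : α) :
    ∃ z, z ≠ x ∧ z ≠ y := by
  have : Finite α := Nat.finite_of_card_ne_zero (by omega)
  exact ENat.exists_ne_ne_of_three_le (by rw [ENat.card_eq_coe_natCard]; exact_mod_cast h) x y

theorem conj_apply_inv_apply {α : Type*} {g k : Equiv.Perm α} {y : α} (h : k (g⁻¹ y) = g⁻¹ y) :
    (k * g * k⁻¹) (g⁻¹ y) = k y := by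
  rw [Equiv.Perm.mul_apply, Equiv.Perm.inv_eq_iff_eq.2 h.symm, Equiv.Perm.mul_apply]
  simp

theorem IsGraphAut.inv {T : SimpleGraph V} {g : Equiv.Perm V} (hg : IsGraphAut T g) :
    IsGraphAut T g⁻¹ := fun u w => by
  simpa using (hg (g⁻¹ u) (g⁻¹ w)).symm

theorem IsGraphAut.of_adj {T : SimpleGraph V} {g : Equiv.Perm V}
    (h : ∀ v w, T.Adj v w → T.Adj (g v) (g w)) (h' : ∀ v w, T.Adj v w → T.Adj (g⁻¹ v) (g⁻¹ w)) :
    IsGraphAut T g := fun v w =>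
  ⟨fun hvw => by simpa using h' _ _ hvw, h v w⟩

def IsGraphAut.toHom {T : SimpleGraph V} {g : Equiv.Perm V} (hg : IsGraphAut T g) : T →g T :=
  ⟨g, (hg _ _).2⟩

section Colors

variable {T : SimpleGraph V} {c : V → V → Ω}

variable (c) in
def walkColors {x y : V} (P : T.Walk x y) : List Ω :=
  P.darts.map fun d => c d.fst d.snd

@[simp] theorem walkColors_nil {x : V} : walkColors c (Walk.nil : T.Walk x x) = [] := rfl

@[simp] theorem walkColors_cons {x y z : V} (h : T.Adj x y) (P : T.Walk y z) :
    walkColors c (Walk.cons h P) = c x y :: walkColors c P := rfl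

theorem walkColors_append {x y z : V} (P : T.Walk x y) (Q : T.Walk y z) :
    walkColors c (P.append Q) = walkColors c P ++ walkColors c Q := by
  simp [walkColors, Walk.darts_append]

theorem length_walkColors {x y : V} (P : T.Walk x y) : (walkColors c P).length = P.length := by
  simp [walkColors]

variable (hbij : ∀ v : V, Set.BijOn (fun w => c v w) (T.neighborSet v) Set.univ)

noncomputable def nbr (v : V) (ω : Ω) : V :=
  ((hbij v).2.2 (Set.mem_univ ω)).choose

theorem nbr_adj (v : V) (ω : Ω) : T.Adj v (nbr hbij v ω) :=
  ((hbij v).2.2 (Set.mem_univ ω)).choose_spec.1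

theorem color_nbr (v : V) (ω : Ω) : c v (nbr hbij v ω) = ω :=
  ((hbij v).2.2 (Set.mem_univ ω)).choose_spec.2

theorem nbr_color {v w : V} (h : T.Adj v w) : nbr hbij v (c v w) = w :=
  (hbij v).2.1 (nbr_adj hbij v _) h (color_nbr hbij v _)

noncomputable def follow (v : V) (l : List Ω) : V :=
  l.foldl (nbr hbij) v

@[simp] theorem follow_nil (v : V) : follow hbij v [] = v := rfl

theorem follow_cons (v : V) (ω : Ω) (l : List Ω) :
    follow hbij v (ω :: l) = follow hbij (nbr hbij v ω) l := rfl

theorem follow_append_singleton (v : V) (l : List Ω) (ω : Ω) :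
    follow hbij v (l ++ [ω]) = nbr hbij (follow hbij v l) ω := by
  simp [follow, List.foldl_append]

theorem follow_take_walkColors {x y : V} (P : T.Walk x y) (n : ℕ) :
    follow hbij x ((walkColors c P).take n) = P.getVert n := by
  induction P generalizing n with
  | nil => simp
  | cons h P ih =>
    cases n with
    | zero => simp
    | succ n => rw [walkColors_cons, List.take_succ_cons, follow_cons, nbr_color hbij h, ih,
        Walk.getVert_cons_succ]

theorem follow_walkColors {x y : V} (P : T.Walk x y) : follow hbij x (walkColors c P) = y := by
  rw [← List.take_of_length_le (length_walkColors P).le, follow_take_walkColors,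
    Walk.getVert_length]

theorem exists_walkColors_eq (x : V) (l : List Ω) :
    ∃ P : T.Walk x (follow hbij x l), walkColors c P = l := by
  induction l generalizing x with
  | nil => exact ⟨Walk.nil, rfl⟩
  | cons ω l ih =>
    obtain ⟨P, hP⟩ := ih (nbr hbij x ω)
    exact ⟨Walk.cons (nbr_adj hbij x ω) P, (walkColors_cons _ P).trans (by rw [hP, color_nbr hbij])⟩

variable (hsym : ∀ u w : V, c u w = c w u)

include hsym hbij in
theorem color_eq_color_iff {x y z : V} (hxy : T.Adj x y) (hyz : T.Adj y z) :
    c x y = c y z ↔ x = z := by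
  refine ⟨fun h => (hbij y).2.1 hxy.symm hyz ?_, fun h => h ▸ hsym x y⟩
  simpa [hsym y x] using h

include hsym hbij in
theorem isChain_walkColors_iff {x y : V} (P : T.Walk x y) :
    (walkColors c P).IsChain (· ≠ ·) ↔ P.edges.IsChain (· ≠ ·) := by
  induction P with
  | nil => simp
  | cons h P ih =>
    cases P with
    | nil => simp
    | cons h' P =>
      simp only [walkColors_cons, Walk.edges_cons, List.isChain_cons_cons] at ih ⊢
      rw [ih, ne_eq, color_eq_color_iff hbij hsym h h']
      simp [h.ne]

include hsym hbij in
theorem isPath_iff_isChain_walkColors (hT : T.IsAcyclic) {x y : V} (P : T.Walk x y) :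
    P.IsPath ↔ (walkColors c P).IsChain (· ≠ ·) := by
  rw [hT.isPath_iff_isChain, isChain_walkColors_iff hbij hsym]

include hbij in
theorem sigma_eq_of_forall_adj (σ : Equiv.Perm V → V → Equiv.Perm Ω)
    (hσ : ∀ g : Equiv.Perm V, IsGraphAut T g →
      ∀ v w : V, T.Adj v w → σ g v (c v w) = c (g v) (g w))
    {g : Equiv.Perm V} (hg : IsGraphAut T g) {v : V} {τ : Equiv.Perm Ω}
    (h : ∀ w, T.Adj v w → c (g v) (g w) = τ (c v w)) : σ g v = τ := by
  ext ω
  obtain ⟨w, hw, rfl⟩ := (hbij v).2.2 (Set.mem_univ ω)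
  rw [hσ g hg v w hw, h w hw]

end Colors

section Codes

variable {T : SimpleGraph V} (hT : T.IsTree) {c : V → V → Ω}
  (hbij : ∀ v : V, Set.BijOn (fun w => c v w) (T.neighborSet v) Set.univ)
  (hsym : ∀ u w : V, c u w = c w u) (v₀ : V)

noncomputable def geodesic (x y : V) : T.Walk x y :=
  (hT.existsUnique_path x y).choose

theorem geodesic_isPath (x y : V) : (geodesic hT x y).IsPath :=
  (hT.existsUnique_path x y).choose_spec.1

theorem eq_geodesic {x y : V} {P : T.Walk x y} (hP : P.IsPath) : P = geodesic hT x y :=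
  (hT.existsUnique_path x y).choose_spec.2 P hP

theorem geodesic_map {g : Equiv.Perm V} (hg : IsGraphAut T g) (x y : V) :
    (geodesic hT x y).map hg.toHom = geodesic hT (g x) (g y) :=
  eq_geodesic hT ((geodesic_isPath hT x y).map g.injective)

theorem length_geodesic_apply {g : Equiv.Perm V} (hg : IsGraphAut T g) (x y : V) :
    (geodesic hT (g x) (g y)).length = (geodesic hT x y).length :=
  (congrArg Walk.length (geodesic_map hT hg x y)).symm.trans (Walk.length_map _ _)

theorem mem_support_geodesic_apply {g : Equiv.Perm V} (hg : IsGraphAut T g) {x y z : V}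
    (hz : z ∈ (geodesic hT x y).support) : g z ∈ (geodesic hT (g x) (g y)).support := by
  have hmem : g z ∈ ((geodesic hT x y).map hg.toHom).support := by
    rw [Walk.support_map]
    exact List.mem_map_of_mem hz
  rwa [geodesic_map hT hg] at hmem

noncomputable def code (c : V → V → Ω) (v : V) : List Ω :=
  walkColors c (geodesic hT v₀ v)

theorem follow_code (v : V) : follow hbij v₀ (code hT v₀ c v) = v :=
  follow_walkColors hbij _

include hbij in
theorem code_injective : Function.Injective (code hT v₀ c) := fun x y h => by
  rw [← follow_code hT hbij v₀ x, h, follow_code]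

include hsym hbij in
theorem isChain_code (v : V) : (code hT v₀ c v).IsChain (· ≠ ·) :=
  (isPath_iff_isChain_walkColors hbij hsym hT.isAcyclic _).1 (geodesic_isPath hT v₀ v)

include hsym in
theorem code_follow {l : List Ω} (hl : l.IsChain (· ≠ ·)) :
    code hT v₀ c (follow hbij v₀ l) = l := by
  obtain ⟨P, hP⟩ := exists_walkColors_eq hbij v₀ l
  have hpath := (isPath_iff_isChain_walkColors hbij hsym hT.isAcyclic P).2 (by rwa [hP])
  rw [code, ← eq_geodesic hT hpath, hP]

theorem code_self : code hT v₀ c v₀ = [] := by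
  rw [code, ← eq_geodesic hT Walk.IsPath.nil, walkColors_nil]

include hsym in
theorem code_nbr {v : V} {ω : Ω} (h : (code hT v₀ c v).getLast? ≠ some ω) :
    code hT v₀ c (nbr hbij v ω) = code hT v₀ c v ++ [ω] := by
  conv_lhs => rw [← follow_code hT hbij v₀ v, ← follow_append_singleton]
  refine code_follow hT hbij hsym v₀
    ((isChain_code hT hbij hsym v₀ v).append (List.isChain_singleton ω) ?_)
  intro a ha b hb hab
  simp only [List.head?_cons, Option.mem_def, Option.some.injEq] at ha hb
  exact h (by rw [ha, hab, hb])

include hbij hsym in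
theorem adj_code {v w : V} (h : T.Adj v w) :
    code hT v₀ c w = code hT v₀ c v ++ [c v w] ∨
      code hT v₀ c v = code hT v₀ c w ++ [c w v] := by
  by_cases hlast : (code hT v₀ c v).getLast? = some (c v w)
  · right
    obtain ⟨l, hl⟩ := List.getLast?_eq_some_iff.1 hlast
    have hpv : nbr hbij (follow hbij v₀ l) (c v w) = v := by
      rw [← follow_append_singleton, ← hl, follow_code]
    have hpw : follow hbij v₀ l = w := by
      refine (hbij v).2.1 (hpv ▸ (nbr_adj hbij _ _).symm) h ?_
      calc c v (follow hbij v₀ l) = c (follow hbij v₀ l) v := hsym _ _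
        _ = c v w := by conv_lhs => rw [← hpv]
                        exact color_nbr hbij _ _
    have hcode : code hT v₀ c (follow hbij v₀ l) = l :=
      code_follow hT hbij hsym v₀ (hl ▸ isChain_code hT hbij hsym v₀ v).left_of_append
    rw [hl, ← hcode, hpw, hsym w v]
  · left
    have := code_nbr hT hbij hsym v₀ hlast
    rwa [nbr_color hbij h] at this

include hbij in
theorem code_prefix_iff_mem_support {x w : V} :
    code hT v₀ c x <+: code hT v₀ c w ↔ x ∈ (geodesic hT v₀ w).support := by
  constructor
  · intro h
    have := follow_take_walkColors hbij (geodesic hT v₀ w) (code hT v₀ c x).length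
    rw [← code, ← List.prefix_iff_eq_take.1 h, follow_code] at this
    exact this ▸ Walk.getVert_mem_support _ _
  · intro h
    have hfst := eq_geodesic hT ((geodesic_isPath hT v₀ w).takeUntil h)
    conv_rhs => rw [code, ← (geodesic hT v₀ w).take_spec h, walkColors_append, hfst, ← code]
    exact List.prefix_append _ _

include hbij hsym in
theorem exists_strictMono_descendants (hd : 3 ≤ Nat.card Ω) (x : V) (a₀ : Ω) :
    ∃ q : ℕ → V, StrictMono (fun j => (code hT v₀ c (q j)).length) ∧
      ∀ j, code hT v₀ c x <+: code hT v₀ c (q j) ∧ (code hT v₀ c (q j)).getLast? = some a₀ := by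
  obtain ⟨b, hba, hbx⟩ :=
    exists_ne_ne_of_three_le_natCard hd a₀ ((code hT v₀ c x).getLast?.getD a₀)
  let step (v : V) : V := nbr hbij (nbr hbij v b) a₀
  have hstep (v : V) (hv : (code hT v₀ c v).getLast? ≠ some b) :
      code hT v₀ c (step v) = code hT v₀ c v ++ [b, a₀] := by
    have hb : (code hT v₀ c (nbr hbij v b)).getLast? ≠ some a₀ := by
      rw [code_nbr hT hbij hsym v₀ hv, List.getLast?_concat]
      exact fun h => hba (Option.some_injective _ h)
    rw [code_nbr hT hbij hsym v₀ hb, code_nbr hT hbij hsym v₀ hv, List.append_assoc]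
    rfl
  have key (j : ℕ) : code hT v₀ c x <+: code hT v₀ c (step^[j + 1] x) ∧
      (code hT v₀ c (step^[j + 1] x)).getLast? = some a₀ ∧
      (code hT v₀ c (step^[j + 1] x)).length = (code hT v₀ c x).length + 2 * (j + 1) := by
    induction j with
    | zero =>
      have hx : (code hT v₀ c x).getLast? ≠ some b := fun h => hbx (by simp [h])
      simp [hstep x hx]
    | succ j ih =>
      obtain ⟨hpre, hlast, hlen⟩ := ih
      have hb : (code hT v₀ c (step^[j + 1] x)).getLast? ≠ some b := by
        rw [hlast]
        exact fun h => hba (Option.some_injective _ h).symm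
      rw [Function.iterate_succ_apply', hstep _ hb]
      refine ⟨hpre.trans (List.prefix_append _ _), by simp, ?_⟩
      simp only [List.length_append, hlen, List.length_cons, List.length_nil]
      ring
  refine ⟨fun j => step^[j + 1] x, strictMono_nat_of_lt_succ fun j => ?_,
    fun j => ⟨(key j).1, (key j).2.1⟩⟩
  simp only [(key _).2.2]
  omega

variable {v₀} {g : Equiv.Perm V} (hg : IsGraphAut T g) (hg₀ : g v₀ = v₀)
include hg hg₀

theorem length_code_apply (v : V) : (code hT v₀ c (g v)).length = (code hT v₀ c v).length := by
  have := length_geodesic_apply hT hg v₀ v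
  rw [hg₀] at this
  simp only [code, length_walkColors, this]

include hbij in
theorem code_prefix_code_apply {x w : V} (h : code hT v₀ c x <+: code hT v₀ c w) :
    code hT v₀ c (g x) <+: code hT v₀ c (g w) := by
  rw [code_prefix_iff_mem_support hT hbij] at h ⊢
  have := mem_support_geodesic_apply hT hg h
  rwa [hg₀] at this

include hbij in
theorem not_code_prefix_code_inv_apply {u s : V} (hu : g u ≠ u)
    (hs : code hT v₀ c (g u) <+: code hT v₀ c s) :
    ¬ code hT v₀ c (g u) <+: code hT v₀ c (g⁻¹ s) := by
  intro h
  have hu' : code hT v₀ c u <+: code hT v₀ c (g⁻¹ s) := by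
    simpa using code_prefix_code_apply hT hbij hg.inv (Equiv.Perm.inv_eq_iff_eq.2 hg₀.symm) hs
  have hlen := length_code_apply hT hg hg₀ (c := c) u
  exact hu (code_injective hT hbij v₀
    ((List.prefix_of_prefix_length_le h hu' hlen.le).eq_of_length hlen))

end Codes

section Twist

variable (π : Equiv.Perm Ω) (f : Ω → Equiv.Perm Ω)

def tailMap : List Ω → List Ω
  | [] => []
  | β :: t => π β :: t.map (f β)

def tailLocal : List Ω → Equiv.Perm Ω
  | [] => π
  | β :: _ => f β

theorem tailMap_append_singleton (r : List Ω) (ω : Ω) :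
    tailMap π f (r ++ [ω]) = tailMap π f r ++ [tailLocal π f r ω] := by
  cases r <;> simp [tailMap, tailLocal]

variable (L : List Ω)

noncomputable def twist (l : List Ω) : List Ω :=
  if L <+: l then L ++ tailMap π f (l.drop L.length) else l

/-- The permutation of outgoing colours that `twist` induces at the vertex coded by `l`. -/
noncomputable def twistLocal (l : List Ω) : Equiv.Perm Ω :=
  if L <+: l then tailLocal π f (l.drop L.length) else 1

theorem twist_append (r : List Ω) : twist π f L (L ++ r) = L ++ tailMap π f r := by
  rw [twist, if_pos (List.prefix_append L r), List.drop_left]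

theorem twist_self : twist π f L L = L := by
  simpa [tailMap] using twist_append π f L []

theorem twist_of_not_prefix {l : List Ω} (h : ¬ L <+: l) : twist π f L l = l := if_neg h

theorem twist_of_length_le {l : List Ω} (h : l.length ≤ L.length) : twist π f L l = l := by
  by_cases hp : L <+: l
  · rw [hp.eq_of_length (le_antisymm hp.length_le h), twist_self]
  · exact twist_of_not_prefix π f L hp

theorem twistLocal_append (r : List Ω) : twistLocal π f L (L ++ r) = tailLocal π f r := by
  rw [twistLocal, if_pos (List.prefix_append L r), List.drop_left]

theorem twistLocal_self : twistLocal π f L L = π := by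
  simpa [tailLocal] using twistLocal_append π f L []

theorem twistLocal_of_not_prefix {l : List Ω} (h : ¬ L <+: l) : twistLocal π f L l = 1 :=
  if_neg h

theorem twist_append_singleton (l : List Ω) (ω : Ω) :
    twist π f L (l ++ [ω]) = twist π f L l ++ [twistLocal π f L l ω] := by
  by_cases hl : L <+: l
  · obtain ⟨r, rfl⟩ := hl
    rw [List.append_assoc, twist_append, twist_append, twistLocal_append,
      tailMap_append_singleton, List.append_assoc]
  rw [twist_of_not_prefix π f L hl, twistLocal_of_not_prefix π f L hl, Equiv.Perm.one_apply]
  by_cases hl' : L <+: l ++ [ω]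
  · obtain rfl := (List.prefix_concat_iff.1 hl').resolve_right hl
    exact twist_self π f _
  · exact twist_of_not_prefix π f L hl'

theorem twistLocal_mem {H : Subgroup (Equiv.Perm Ω)} (hf : ∀ b, f b ∈ H) {l : List Ω}
    (hπ : l = L → π ∈ H) : twistLocal π f L l ∈ H := by
  by_cases hl : L <+: l
  · obtain ⟨r, rfl⟩ := hl
    rw [twistLocal_append]
    cases r with
    | nil => exact hπ (List.append_nil L)
    | cons β t => exact hf β
  · rw [twistLocal_of_not_prefix π f L hl]
    exact one_mem H

theorem twist_twist {π π' : Equiv.Perm Ω} {f f' : Ω → Equiv.Perm Ω} (hπ : ∀ b, π' (π b) = b)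
    (hf' : ∀ b, f' (π b) = (f b)⁻¹) (l : List Ω) : twist π' f' L (twist π f L l) = l := by
  by_cases hp : L <+: l
  · obtain ⟨r, rfl⟩ := hp
    rw [twist_append, twist_append]
    cases r with
    | nil => rfl
    | cons β t => simp [tailMap, hπ, hf', List.map_map, Function.comp_def]
  · rw [twist_of_not_prefix π f L hp, twist_of_not_prefix π' f' L hp]

variable {π f L} (hL : ∀ a ∈ L.getLast?, π a = a) (hf : ∀ b, f b b = π b)
include hL hf

theorem isChain_twist {l : List Ω} (hl : l.IsChain (· ≠ ·)) :
    (twist π f L l).IsChain (· ≠ ·) := by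
  by_cases hp : L <+: l
  · obtain ⟨r, rfl⟩ := hp
    rw [twist_append]
    cases r with
    | nil => simpa [tailMap] using hl
    | cons β t =>
      have hmap : tailMap π f (β :: t) = (β :: t).map (f β) := by simp [tailMap, hf]
      rw [hmap]
      refine hl.left_of_append.append ((List.isChain_map _).2
        (hl.right_of_append.imp fun a b hab h => hab ((f β).injective h))) ?_
      intro a ha b hb hab
      have hβ : b = π β := by simpa [hf] using hb.symm
      exact (List.isChain_append.1 hl).2.2 a ha β rfl
        (π.injective (by rw [hL a ha, hab, hβ]))
  · rwa [twist_of_not_prefix π f L hp]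

theorem twistLocal_append_singleton_self (l : List Ω) (ω : Ω) :
    twistLocal π f L (l ++ [ω]) ω = twistLocal π f L l ω := by
  by_cases hl : L <+: l
  · obtain ⟨r, rfl⟩ := hl
    rw [List.append_assoc, twistLocal_append, twistLocal_append]
    cases r with
    | nil => exact hf ω
    | cons β t => rfl
  rw [twistLocal_of_not_prefix π f L hl]
  by_cases hl' : L <+: l ++ [ω]
  · obtain rfl := (List.prefix_concat_iff.1 hl').resolve_right hl
    rw [twistLocal_self]
    exact hL ω List.getLast?_concat
  · rw [twistLocal_of_not_prefix π f L hl']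

end Twist

section TwistAut

variable {T : SimpleGraph V} (hT : T.IsTree) {c : V → V → Ω}
  (hbij : ∀ v : V, Set.BijOn (fun w => c v w) (T.neighborSet v) Set.univ)
  (hsym : ∀ u w : V, c u w = c w u) (v₀ : V)

noncomputable def viaCodes (φ : List Ω → List Ω) (v : V) : V :=
  follow hbij v₀ (φ (code hT v₀ c v))

variable {φ ψ : List Ω → List Ω}

include hsym in
theorem code_viaCodes (hφ : ∀ l : List Ω, l.IsChain (· ≠ ·) → (φ l).IsChain (· ≠ ·)) (v : V) :
    code hT v₀ c (viaCodes hT hbij v₀ φ v) = φ (code hT v₀ c v) :=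
  code_follow hT hbij hsym v₀ (hφ _ (isChain_code hT hbij hsym v₀ v))

include hsym in
theorem viaCodes_viaCodes (hφ : ∀ l : List Ω, l.IsChain (· ≠ ·) → (φ l).IsChain (· ≠ ·))
    (hψφ : ∀ l, ψ (φ l) = l) (v : V) : viaCodes hT hbij v₀ ψ (viaCodes hT hbij v₀ φ v) = v := by
  rw [viaCodes, code_viaCodes hT hbij hsym v₀ hφ, hψφ, follow_code]

theorem viaCodes_of_eq {v : V} (h : φ (code hT v₀ c v) = code hT v₀ c v) :
    viaCodes hT hbij v₀ φ v = v := by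
  rw [viaCodes, h, follow_code]

theorem viaCodes_eq_nbr {v w : V} {ω ω' : Ω} (hc : code hT v₀ c w = code hT v₀ c v ++ [ω])
    (hφ : φ (code hT v₀ c v ++ [ω]) = φ (code hT v₀ c v) ++ [ω']) :
    viaCodes hT hbij v₀ φ w = nbr hbij (viaCodes hT hbij v₀ φ v) ω' := by
  rw [viaCodes, hc, hφ, follow_append_singleton]
  rfl

include hsym in
theorem adj_viaCodes (hφ : ∀ l ω, ∃ ω', φ (l ++ [ω]) = φ l ++ [ω']) {v w : V} (h : T.Adj v w) :
    T.Adj (viaCodes hT hbij v₀ φ v) (viaCodes hT hbij v₀ φ w) := by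
  rcases adj_code hT hbij hsym v₀ h with hc | hc
  · obtain ⟨ω', hω'⟩ := hφ (code hT v₀ c v) (c v w)
    rw [viaCodes_eq_nbr hT hbij v₀ hc hω']
    exact nbr_adj hbij _ _
  · obtain ⟨ω', hω'⟩ := hφ (code hT v₀ c w) (c w v)
    rw [viaCodes_eq_nbr hT hbij v₀ hc hω']
    exact (nbr_adj hbij _ _).symm

noncomputable def permViaCodes (hφ : ∀ l : List Ω, l.IsChain (· ≠ ·) → (φ l).IsChain (· ≠ ·))
    (hψ : ∀ l : List Ω, l.IsChain (· ≠ ·) → (ψ l).IsChain (· ≠ ·))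
    (hψφ : ∀ l, ψ (φ l) = l) (hφψ : ∀ l, φ (ψ l) = l) : Equiv.Perm V where
  toFun := viaCodes hT hbij v₀ φ
  invFun := viaCodes hT hbij v₀ ψ
  left_inv := viaCodes_viaCodes hT hbij hsym v₀ hφ hψφ
  right_inv := viaCodes_viaCodes hT hbij hsym v₀ hψ hφψ

theorem isGraphAut_permViaCodes (hφ : ∀ l : List Ω, l.IsChain (· ≠ ·) → (φ l).IsChain (· ≠ ·))
    (hψ : ∀ l : List Ω, l.IsChain (· ≠ ·) → (ψ l).IsChain (· ≠ ·))
    (hψφ : ∀ l, ψ (φ l) = l) (hφψ : ∀ l, φ (ψ l) = l)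
    (hφ' : ∀ l ω, ∃ ω', φ (l ++ [ω]) = φ l ++ [ω'])
    (hψ' : ∀ l ω, ∃ ω', ψ (l ++ [ω]) = ψ l ++ [ω']) :
    IsGraphAut T (permViaCodes hT hbij hsym v₀ hφ hψ hψφ hφψ) :=
  IsGraphAut.of_adj (fun _ _ => adj_viaCodes hT hbij hsym v₀ hφ')
    (fun _ _ => adj_viaCodes hT hbij hsym v₀ hψ')

variable {π : Equiv.Perm Ω} {f : Ω → Equiv.Perm Ω} {L : List Ω}
  (hL : ∀ a ∈ L.getLast?, π a = a) (hf : ∀ b, f b b = π b)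

noncomputable def twistAut : Equiv.Perm V :=
  permViaCodes hT hbij hsym v₀ (φ := twist π f L) (ψ := twist π⁻¹ (fun b => (f (π⁻¹ b))⁻¹) L)
    (fun _ => isChain_twist hL hf)
    (fun _ => isChain_twist (fun a ha => by rw [Equiv.Perm.inv_eq_iff_eq, hL a ha])
      fun b => by rw [Equiv.Perm.inv_eq_iff_eq, hf]; simp)
    (twist_twist _ (by simp) (by simp)) (twist_twist _ (by simp) (by simp))

theorem twistAut_apply (v : V) :
    twistAut hT hbij hsym v₀ hL hf v = viaCodes hT hbij v₀ (twist π f L) v := rfl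

theorem isGraphAut_twistAut : IsGraphAut T (twistAut hT hbij hsym v₀ hL hf) :=
  isGraphAut_permViaCodes hT hbij hsym v₀ _ _ _ _
    (fun l ω => ⟨_, twist_append_singleton π f L l ω⟩)
    (fun l ω => ⟨_, twist_append_singleton _ _ L l ω⟩)

theorem twistAut_apply_of_not_prefix {v : V} (h : ¬ L <+: code hT v₀ c v) :
    twistAut hT hbij hsym v₀ hL hf v = v :=
  viaCodes_of_eq hT hbij v₀ (twist_of_not_prefix π f L h)

theorem twistAut_apply_of_length_le {v : V} (h : (code hT v₀ c v).length ≤ L.length) :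
    twistAut hT hbij hsym v₀ hL hf v = v :=
  viaCodes_of_eq hT hbij v₀ (twist_of_length_le π f L h)

theorem twistAut_nbr {q : V} (hq : code hT v₀ c q = L) {β : Ω} (hβ : L.getLast? ≠ some β) :
    twistAut hT hbij hsym v₀ hL hf (nbr hbij q β) = nbr hbij q (π β) := by
  have hc := code_nbr hT hbij hsym v₀ (hq ▸ hβ)
  rw [twistAut_apply, viaCodes_eq_nbr hT hbij v₀ (ω' := π β) hc
    (by rw [twist_append_singleton, hq, twistLocal_self]),
    viaCodes_of_eq hT hbij v₀ (by rw [hq, twist_self])]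

theorem sigma_twistAut (σ : Equiv.Perm V → V → Equiv.Perm Ω)
    (hσ : ∀ g : Equiv.Perm V, IsGraphAut T g →
      ∀ v w : V, T.Adj v w → σ g v (c v w) = c (g v) (g w)) (v : V) :
    σ (twistAut hT hbij hsym v₀ hL hf) v = twistLocal π f L (code hT v₀ c v) := by
  refine sigma_eq_of_forall_adj hbij σ hσ (isGraphAut_twistAut hT hbij hsym v₀ hL hf)
    fun w hvw => ?_
  rw [twistAut_apply, twistAut_apply]
  rcases adj_code hT hbij hsym v₀ hvw with hc | hc
  · rw [viaCodes_eq_nbr hT hbij v₀ hc (twist_append_singleton π f L _ _), color_nbr hbij]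
  · rw [hsym, viaCodes_eq_nbr hT hbij v₀ hc (twist_append_singleton π f L _ _), color_nbr hbij,
      ← twistLocal_append_singleton_self hL hf, ← hc, hsym]

theorem memGFF_twistAut (σ : Equiv.Perm V → V → Equiv.Perm Ω)
    (hσ : ∀ g : Equiv.Perm V, IsGraphAut T g →
      ∀ v w : V, T.Adj v w → σ g v (c v w) = c (g v) (g w))
    {F F' : Subgroup (Equiv.Perm Ω)} (hle : F ≤ F') (hπ : π ∈ F') (hfF : ∀ b, f b ∈ F) :
    MemGFF T σ F F' (twistAut hT hbij hsym v₀ hL hf) := by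
  refine ⟨isGraphAut_twistAut hT hbij hsym v₀ hL hf, fun v => ?_, ?_⟩
  · rw [sigma_twistAut hT hbij hsym v₀ hL hf σ hσ]
    exact twistLocal_mem π f L (fun b => hle (hfF b)) fun _ => hπ
  · refine (Set.finite_singleton (follow hbij v₀ L)).subset fun v hv => ?_
    by_contra hne
    refine hv ?_
    rw [sigma_twistAut hT hbij hsym v₀ hL hf σ hσ]
    refine twistLocal_mem π f L hfF fun h => absurd ?_ hne
    rw [Set.mem_singleton_iff, ← h, follow_code]

theorem twistAut_conj_ne {γ : Equiv.Perm V} (hγ : IsGraphAut T γ) (hγ₀ : γ v₀ = v₀) {u : V}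
    (hu : γ u ≠ u) {q : V} (hq : code hT v₀ c q = L) {L' : List Ω}
    (hL' : ∀ a ∈ L'.getLast?, π a = a) (hpre : code hT v₀ c (γ u) <+: L)
    (hpre' : code hT v₀ c (γ u) <+: L') (hlen : L.length < L'.length) {β : Ω} (hβ : π β ≠ β) :
    twistAut hT hbij hsym v₀ hL hf * γ * (twistAut hT hbij hsym v₀ hL hf)⁻¹ ≠
      twistAut hT hbij hsym v₀ hL' hf * γ * (twistAut hT hbij hsym v₀ hL' hf)⁻¹ := by
  have hβ_last : L.getLast? ≠ some β := fun h => hβ (hL β h)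
  have hcs : code hT v₀ c (nbr hbij q β) = L ++ [β] := by
    rw [code_nbr hT hbij hsym v₀ (hq ▸ hβ_last), hq]
  have hfix {L'' : List Ω} (hL'' : ∀ a ∈ L''.getLast?, π a = a)
      (hpre'' : code hT v₀ c (γ u) <+: L'') :
      twistAut hT hbij hsym v₀ hL'' hf (γ⁻¹ (nbr hbij q β)) = γ⁻¹ (nbr hbij q β) :=
    twistAut_apply_of_not_prefix hT hbij hsym v₀ hL'' hf fun h =>
      not_code_prefix_code_inv_apply hT hbij hγ hγ₀ hu
        (hcs ▸ hpre.trans (List.prefix_append _ _)) (hpre''.trans h)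
  intro heq
  have := congrArg (fun g : Equiv.Perm V => g (γ⁻¹ (nbr hbij q β))) heq
  rw [conj_apply_inv_apply (hfix hL hpre), conj_apply_inv_apply (hfix hL' hpre'),
    twistAut_apply_of_length_le hT hbij hsym v₀ hL' hf
      (by rw [hcs, List.length_append]; exact hlen),
    twistAut_nbr hT hbij hsym v₀ hL hf hq hβ_last] at this
  exact hβ (by simpa only [color_nbr hbij] using congrArg (c q) this)

end TwistAut

theorem exists_mem_fixing_ne_one {F F' : Subgroup (Equiv.Perm Ω)} (hle : F ≤ F') (hne : F ≠ F')
    (horb : ∀ g ∈ F', ∀ a : Ω, ∃ f ∈ F, g a = f a) (a : Ω) :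
    ∃ π ∈ F', π a = a ∧ π ≠ 1 := by
  obtain ⟨π₀, hπ₀F', hπ₀F⟩ := SetLike.exists_of_lt (lt_of_le_of_ne hle hne)
  obtain ⟨f₀, hf₀F, hf₀⟩ := horb π₀ hπ₀F' a
  refine ⟨f₀⁻¹ * π₀, mul_mem (inv_mem (hle hf₀F)) hπ₀F', by simp [hf₀], fun h => hπ₀F ?_⟩
  exact inv_mul_eq_one.1 h ▸ hf₀F

/-- Let `F ≨ F' ≤ Sym(Ω)` (with `F'` preserving the `F`-orbits) and
let `K(F,F')` be the stabilizer of a vertex `v₀` of the `d`-regular tree `T_d`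
(`d = |Ω| ≥ 3`) in `G(F,F')`.  Then `K(F,F')` is an ICC group: every non-trivial
element has an infinite conjugacy class in `K(F,F')`. -/
theorem KFF_is_ICC {V Ω : Type*} (T : SimpleGraph V)
    (hT : T.IsTree) (hd : 3 ≤ Nat.card Ω) (c : V → V → Ω)
    (hsym : ∀ u w : V, c u w = c w u)
    (hbij : ∀ v : V, Set.BijOn (fun w => c v w) (T.neighborSet v) Set.univ)
    (σ : Equiv.Perm V → V → Equiv.Perm Ω)
    (hσ : ∀ g : Equiv.Perm V, IsGraphAut T g →
      ∀ v w : V, T.Adj v w → σ g v (c v w) = c (g v) (g w))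
    (F F' : Subgroup (Equiv.Perm Ω)) (hle : F ≤ F') (hne : F ≠ F')
    (horb : ∀ g ∈ F', ∀ a : Ω, ∃ f ∈ F, g a = f a)
    (v₀ : V) :
    ∀ γ : Equiv.Perm V, MemGFF T σ F F' γ → γ v₀ = v₀ → γ ≠ 1 →
      {x : Equiv.Perm V |
        ∃ k : Equiv.Perm V, MemGFF T σ F F' k ∧ k v₀ = v₀ ∧ x = k * γ * k⁻¹}.Infinite := by
  intro γ hγ hγv₀ hγ1
  obtain ⟨u, hu⟩ : ∃ u, γ u ≠ u := by
    by_contra! h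
    exact hγ1 (Equiv.ext h)
  obtain ⟨⟨a₀⟩, -⟩ := Nat.card_pos_iff.1 (by omega : 0 < Nat.card Ω)
  obtain ⟨π, hπF', hπa₀, hπ1⟩ := exists_mem_fixing_ne_one hle hne horb a₀
  obtain ⟨β, hβ⟩ : ∃ β, π β ≠ β := by
    by_contra! h
    exact hπ1 (Equiv.ext h)
  choose f hfF hf using fun b => horb π hπF' b
  have hf' (b : Ω) : f b b = π b := (hf b).symm
  obtain ⟨q, hq_mono, hq⟩ := exists_strictMono_descendants hT hbij hsym v₀ hd (γ u) a₀
  have hL (j : ℕ) : ∀ a ∈ (code hT v₀ c (q j)).getLast?, π a = a := by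
    rw [(hq j).2]
    intro a ha
    rw [← Option.mem_some_iff.1 ha, hπa₀]
  let k (j : ℕ) := twistAut hT hbij hsym v₀ (hL j) hf'
  refine Set.infinite_of_injective_forall_mem (f := fun j => k j * γ * (k j)⁻¹)
    (Function.Injective.of_lt_imp_ne fun i j hij => twistAut_conj_ne hT hbij hsym v₀ (hL i) hf'
      hγ.1 hγv₀ hu rfl (hL j) (hq i).1 (hq j).1 (hq_mono hij) hβ)
    fun j => ⟨_, memGFF_twistAut hT hbij hsym v₀ _ _ σ hσ hle hπF' hfF,
      twistAut_apply_of_length_le hT hbij hsym v₀ _ _ (by simp [code_self]), rfl⟩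

end PrescribedLocalAction
end
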